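/- arXiv:1212.4663 — 6 statements merged into one kernel-verified Lean document; each statement's English description precedes it below -/
import Mathlib

section
/- Let U_1, ..., U_n be independent real random variables such that for each k, U_k ∈ [a_k, b_k] almost surely for some constants a_k < b_k, and let μ_n = Σ_{k=1}^n E[U_k]. For each k set p_k = (E[U_k] − a_k)/(b_k − a_k), and define c_k = (1 − 2p_k)/(4 ln((1 − p_k)/p_k)) if p_k ≠ 1/2 and c_k = 1/8 if p_k = 1/2. Then for every r ≥ 0, P(|Σ_{k=1}^n U_k − μ_n| ≥ r) ≤ 2 exp(−r² / (4 Σ_{k=1}^n c_k (b_k − a_k)²)). (Kearns–Saul inequality.) -/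
/-!
Normalised to `[0, 1]`, a variable `Y` with mean `p` satisfies `E e^{sY} ≤ 1 - p + p e^s` by
convexity of `exp`, and the Kearns–Saul lemma `1 - p + p e^s ≤ exp (p s + c(p) s²)` makes
`Y - p` sub-Gaussian with variance proxy `2 c(p)`. Independence adds the proxies, and the
Chernoff bound controls each tail.

For the lemma write `1 - 2p = tanh v`: then `1 - p + p e^s = e^{s/2} cosh (s/2 - v) / cosh v` and
`c(p) = tanh v / (8v)`, so it becomes `log cosh u - log cosh v ≤ tanh v / (2v) * (u² - v²)`.
That is, `u ↦ log cosh u - tanh v / (2v) * u²` peaks at `u = ±v`: its derivative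
`tanh u - (tanh v / v) u` changes sign at `|u| = |v|` because `tanh` is concave on `[0, ∞)`.
For `p = 1/2` it is `cosh u ≤ exp (u² / 2)`.
-/

open MeasureTheory ProbabilityTheory

/-- The Kearns--Saul coefficient `c(p)`: `(1 - 2p)/(4 ln((1-p)/p))` for `p ≠ 1/2`,
and `1/8` for `p = 1/2`. -/
noncomputable def ksCoeff (p : ℝ) : ℝ :=
  if p = 1/2 then 1/8 else (1 - 2*p) / (4 * Real.log ((1 - p) / p))

open Real Set

namespace Real

lemma hasDerivAt_tanh (x : ℝ) : HasDerivAt tanh (1 / cosh x ^ 2) x := by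
  have h := (hasDerivAt_sinh x).div (hasDerivAt_cosh x) (cosh_pos x).ne'
  rw [show sinh / cosh = tanh from funext fun y => (tanh_eq_sinh_div_cosh y).symm] at h
  refine h.congr_deriv ?_
  rw [← sq, ← sq, cosh_sq]
  ring

lemma hasDerivAt_log_cosh (x : ℝ) : HasDerivAt (fun y => log (cosh y)) (tanh x) x := by
  simpa [tanh_eq_sinh_div_cosh] using (hasDerivAt_cosh x).log (cosh_pos x).ne'

lemma concaveOn_tanh : ConcaveOn ℝ (Ici 0) tanh := by
  refine AntitoneOn.concaveOn_of_deriv (convex_Ici 0)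
    (fun x _ => (hasDerivAt_tanh x).continuousAt.continuousWithinAt)
    (fun x _ => (hasDerivAt_tanh x).differentiableAt.differentiableWithinAt) ?_
  intro x hx y hy hxy
  rw [interior_Ici] at hx hy
  simp only [(hasDerivAt_tanh _).deriv]
  have : cosh x ≤ cosh y := cosh_le_cosh.2 (by rw [abs_of_pos hx, abs_of_pos hy]; exact hxy)
  gcongr

lemma tanh_div_le_tanh_div {x y : ℝ} (hx : 0 < x) (hxy : x ≤ y) :
    tanh y / y ≤ tanh x / x := by
  have h := concaveOn_tanh.neg.secant_mono (a := 0) self_mem_Ici hx.le (hx.trans_le hxy).le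
    hx.ne' (hx.trans_le hxy).ne' hxy
  simp only [Pi.neg_apply, tanh_zero, neg_zero, sub_zero, neg_div] at h
  linarith

lemma log_cosh_sub_le_of_nonneg {u v : ℝ} (hu : 0 ≤ u) (hv : 0 < v) :
    log (cosh u) - log (cosh v) ≤ tanh v / (2 * v) * (u ^ 2 - v ^ 2) := by
  set k := tanh v / (2 * v)
  set φ := fun x => log (cosh x) - k * x ^ 2
  have hφ (x : ℝ) : HasDerivAt φ (tanh x - tanh v / v * x) x := by
    refine ((hasDerivAt_log_cosh x).sub ((hasDerivAt_pow 2 x).const_mul k)).congr_deriv ?_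
    simp only [k]; field_simp; ring
  have hφc : Continuous φ := continuous_iff_continuousAt.2 fun x => (hφ x).continuousAt
  suffices φ u ≤ φ v by simp only [φ] at this; linarith
  rcases le_total u v with huv | hvu
  · refine monotoneOn_of_hasDerivWithinAt_nonneg (convex_Icc 0 v) hφc.continuousOn
      (fun x _ => (hφ x).hasDerivWithinAt) ?_ ⟨hu, huv⟩ ⟨hv.le, le_rfl⟩ huv
    rw [interior_Icc]
    rintro x ⟨hx0, hxv⟩
    have := mul_le_mul_of_nonneg_right (tanh_div_le_tanh_div hx0 hxv.le) hx0.le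
    rw [div_mul_cancel₀ _ hx0.ne'] at this
    linarith
  · refine antitoneOn_of_hasDerivWithinAt_nonpos (convex_Ici v) hφc.continuousOn
      (fun x _ => (hφ x).hasDerivWithinAt) ?_ self_mem_Ici hvu hvu
    rw [interior_Ici]
    intro x hx
    have hx0 : 0 < x := hv.trans hx
    have := mul_le_mul_of_nonneg_right (tanh_div_le_tanh_div hv (le_of_lt hx)) hx0.le
    rw [div_mul_cancel₀ _ hx0.ne'] at this
    linarith

lemma log_cosh_sub_le {u v : ℝ} (hv : v ≠ 0) :
    log (cosh u) - log (cosh v) ≤ tanh v / (2 * v) * (u ^ 2 - v ^ 2) := by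
  have key := log_cosh_sub_le_of_nonneg (abs_nonneg u) (abs_pos.2 hv)
  have heven : tanh |v| / (2 * |v|) = tanh v / (2 * v) := by
    rcases abs_choice v with h | h <;> rw [h]
    rw [tanh_neg]; ring
  rwa [cosh_abs, cosh_abs, sq_abs, sq_abs, heven] at key

end Real

-- For `p ∉ [0, 1]` this relies on `log x = log |x|`.
lemma ksCoeff_nonneg (p : ℝ) : 0 ≤ ksCoeff p := by
  rcases eq_or_ne p 0 with rfl | hp
  · simp [ksCoeff]
  have hpos : 0 < |p| := abs_pos.2 hp
  unfold ksCoeff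
  split_ifs
  · norm_num
  rw [← log_abs, abs_div]
  rcases le_total 0 (1 - 2 * p) with h | h
  · refine div_nonneg h (mul_nonneg zero_le_four (log_nonneg ?_))
    rw [one_le_div hpos, ← sq_le_sq]
    nlinarith
  · refine div_nonneg_of_nonpos h (mul_nonpos_of_nonneg_of_nonpos zero_le_four
      (log_nonpos (by positivity) ?_))
    rw [div_le_one hpos, ← sq_le_sq]
    nlinarith

lemma one_sub_add_mul_exp_eq_cosh (v s : ℝ) :
    1 - (1 - tanh v) / 2 + (1 - tanh v) / 2 * exp s = exp (s / 2) * cosh (s / 2 - v) / cosh v := by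
  have hs : exp s = exp (s / 2) ^ 2 := by rw [← exp_nat_mul]; ring_nf
  rw [tanh_eq_sinh_div_cosh, sinh_eq, cosh_eq, cosh_eq, exp_sub, exp_neg, exp_neg, exp_sub, hs]
  have := exp_pos v
  have := exp_pos (s / 2)
  field_simp
  ring

lemma ksCoeff_eq_tanh_div {p : ℝ} (hp0 : 0 < p) (hp1 : p < 1) (hp : p ≠ 1 / 2) :
    ksCoeff p = tanh (artanh (1 - 2 * p)) / (8 * artanh (1 - 2 * p)) := by
  rw [ksCoeff, if_neg hp, tanh_artanh ⟨by linarith, by linarith⟩,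
    artanh_eq_half_log ⟨by linarith, by linarith⟩]
  have : (1 + (1 - 2 * p)) / (1 - (1 - 2 * p)) = (1 - p) / p := by field_simp; ring
  rw [this]
  ring

theorem one_sub_add_mul_exp_le_exp_ksCoeff {p : ℝ} (hp0 : 0 ≤ p) (hp1 : p ≤ 1) (s : ℝ) :
    1 - p + p * exp s ≤ exp (p * s + ksCoeff p * s ^ 2) := by
  rcases hp0.eq_or_lt with rfl | hp0
  · simp [ksCoeff]
  rcases hp1.eq_or_lt with rfl | hp1
  · simp [ksCoeff]
  set v := artanh (1 - 2 * p)
  have htanh : tanh v = 1 - 2 * p := tanh_artanh ⟨by linarith, by linarith⟩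
  have hp : p = (1 - tanh v) / 2 := by linarith
  rw [hp, one_sub_add_mul_exp_eq_cosh, ← hp, mul_div_assoc, ← log_le_iff_le_exp (by positivity),
    log_mul (exp_pos _).ne' (by positivity), log_exp, log_div (cosh_pos _).ne' (cosh_pos _).ne']
  by_cases hv : v = 0
  · have hp2 : p = 1 / 2 := by rw [hp, hv, tanh_zero]; norm_num
    have := log_le_log (cosh_pos _) (cosh_le_exp_half_sq (s / 2))
    rw [log_exp] at this
    rw [hv, sub_zero, cosh_zero, log_one, sub_zero, hp2, ksCoeff, if_pos rfl]
    linarith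
  · have := log_cosh_sub_le (u := s / 2 - v) hv
    have hc : ksCoeff p = tanh v / (8 * v) :=
      ksCoeff_eq_tanh_div hp0 hp1 fun h => hv (by simp [v, h])
    have hps : p * s = s / 2 - tanh v / 2 * s := by rw [hp]; ring
    have hk : tanh v / (2 * v) * ((s / 2 - v) ^ 2 - v ^ 2) =
        tanh v / (8 * v) * s ^ 2 - tanh v / 2 * s := by
      field_simp; ring
    rw [hc, hps]
    linarith

lemma exp_mul_le_one_sub_add_mul_exp {y : ℝ} (hy : y ∈ Icc (0 : ℝ) 1) (s : ℝ) :
    exp (s * y) ≤ 1 - y + y * exp s := by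
  have := convexOn_exp.2 (mem_univ 0) (mem_univ s) (sub_nonneg.2 hy.2) hy.1 (sub_add_cancel 1 y)
  simpa [mul_comm s] using this

namespace ProbabilityTheory

variable {Ω : Type*} [MeasurableSpace Ω] {μ : Measure Ω} {X : Ω → ℝ}

lemma HasSubgaussianMGF.measureReal_abs_ge_le {c : NNReal} (h : HasSubgaussianMGF X c μ) {ε : ℝ}
    (hε : 0 ≤ ε) : μ.real {ω | ε ≤ |X ω|} ≤ 2 * exp (-ε ^ 2 / (2 * c)) := by
  have hsplit : {ω | ε ≤ |X ω|} = {ω | ε ≤ X ω} ∪ {ω | ε ≤ (-X) ω} := by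
    ext ω
    simp only [mem_ofPred_eq, mem_union, Pi.neg_apply, le_abs', le_neg]
    exact or_comm
  rw [hsplit, two_mul]
  exact (measureReal_union_le _ _).trans
    (add_le_add (h.measure_ge_le hε) (h.neg.measure_ge_le hε))

variable [IsProbabilityMeasure μ]

lemma mgf_le_one_sub_add_mul_exp (hX : AEMeasurable X μ) (h01 : ∀ᵐ ω ∂μ, X ω ∈ Icc 0 1)
    (s : ℝ) :
    mgf X μ s ≤ 1 - μ[X] + μ[X] * exp s := by
  have hint : Integrable X μ := Integrable.of_mem_Icc 0 1 hX h01
  have h1 : Integrable (fun ω => 1 - X ω) μ := (integrable_const 1).sub hint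
  have h2 : Integrable (fun ω => X ω * exp s) μ := hint.mul_const _
  calc mgf X μ s ≤ μ[fun ω => 1 - X ω + X ω * exp s] :=
        integral_mono_ae (integrable_exp_mul_of_mem_Icc hX h01) (h1.add h2)
          (h01.mono fun ω hω => exp_mul_le_one_sub_add_mul_exp hω s)
    _ = 1 - μ[X] + μ[X] * exp s := by
        rw [integral_add h1 h2, integral_sub (integrable_const 1) hint, integral_mul_const]
        simp

lemma hasSubgaussianMGF_ksCoeff_of_mem_unitInterval (hX : AEMeasurable X μ)
    (h01 : ∀ᵐ ω ∂μ, X ω ∈ Icc 0 1) :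
    HasSubgaussianMGF (fun ω => X ω - μ[X]) (2 * ksCoeff μ[X]).toNNReal μ where
  integrable_exp_mul _ := integrable_exp_mul_of_mem_Icc (hX.sub_const _)
    (h01.mono fun ω hω => ⟨sub_le_sub_right hω.1 _, sub_le_sub_right hω.2 _⟩)
  mgf_le s := by
    have hmean : μ[X] ∈ Icc 0 1 :=
      (convex_Icc 0 1).integral_mem isClosed_Icc h01 (Integrable.of_mem_Icc 0 1 hX h01)
    have hshift : (fun ω => X ω - μ[X]) = fun ω => -μ[X] + X ω := by ext; ring
    rw [hshift, mgf_const_add, Real.coe_toNNReal _ (mul_nonneg zero_le_two (ksCoeff_nonneg _))]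
    calc exp (s * -μ[X]) * mgf X μ s
        ≤ exp (s * -μ[X]) * exp (μ[X] * s + ksCoeff μ[X] * s ^ 2) := by
          gcongr
          exact (mgf_le_one_sub_add_mul_exp hX h01 s).trans
            (one_sub_add_mul_exp_le_exp_ksCoeff hmean.1 hmean.2 s)
      _ = exp (2 * ksCoeff μ[X] * s ^ 2 / 2) := by
          rw [← exp_add]; ring_nf

theorem hasSubgaussianMGF_ksCoeff_of_mem_Icc {a b : ℝ} (hab : a < b) (hX : AEMeasurable X μ)
    (hb : ∀ᵐ ω ∂μ, X ω ∈ Icc a b) :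
    HasSubgaussianMGF (fun ω => X ω - μ[X])
      (2 * ksCoeff ((μ[X] - a) / (b - a)) * (b - a) ^ 2).toNNReal μ := by
  have hba : 0 < b - a := sub_pos.2 hab
  set Y := fun ω => (X ω - a) / (b - a)
  have hY : ∀ᵐ ω ∂μ, Y ω ∈ Icc 0 1 := hb.mono fun ω hω =>
    ⟨div_nonneg (by linarith [hω.1]) hba.le, (div_le_one hba).2 (by linarith [hω.2])⟩
  have hmean : μ[Y] = (μ[X] - a) / (b - a) := by
    change ∫ ω, (X ω - a) / (b - a) ∂μ = _
    rw [integral_div, integral_sub (Integrable.of_mem_Icc a b hX hb) (integrable_const a)]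
    simp
  have h := (hasSubgaussianMGF_ksCoeff_of_mem_unitInterval
    ((hX.sub_const a).div_const (b - a)) hY).const_mul (b - a)
  rw [hmean] at h
  convert h using 1
  · ext ω
    field_simp
    ring
  · have hc := mul_nonneg zero_le_two (ksCoeff_nonneg ((μ[X] - a) / (b - a)))
    ext
    change _ = (b - a) ^ 2 * ((2 * ksCoeff _).toNNReal : ℝ)
    rw [Real.coe_toNNReal _ hc,
      Real.coe_toNNReal _ (mul_nonneg hc (sq_nonneg _))]
    ring

end ProbabilityTheory

/-- **Kearns–Saul inequality.** Let `U 0, ..., U (n-1)` be independent real random variables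
with `U k ∈ [a k, b k]` almost surely, `a k < b k`. With `p k = (E[U k] - a k)/(b k - a k)` and
`c k = ksCoeff (p k)`, for every `r ≥ 0`,
`P(|∑ U k - ∑ E[U k]| ≥ r) ≤ 2 exp(- r² / (4 ∑ c k (b k - a k)²))`. -/
theorem kearns_saul_inequality {Ω : Type*} [MeasurableSpace Ω] {μ : Measure Ω}
    [IsProbabilityMeasure μ] {n : ℕ} (U : Fin n → Ω → ℝ) (a b : Fin n → ℝ)
    (hab : ∀ k, a k < b k)
    (hmeas : ∀ k, Measurable (U k))
    (hindep : iIndepFun U μ)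
    (hbdd : ∀ k, ∀ᵐ ω ∂μ, U k ω ∈ Set.Icc (a k) (b k))
    {r : ℝ} (hr : 0 ≤ r) :
    μ {ω | r ≤ |(∑ k, U k ω) - ∑ k, ∫ ω', U k ω' ∂μ|} ≤
      ENNReal.ofReal (2 * Real.exp (-(r^2) /
        (4 * ∑ k, ksCoeff (((∫ ω', U k ω' ∂μ) - a k) / (b k - a k)) * (b k - a k)^2))) := by
  have hcentered : iIndepFun (fun k ω => U k ω - μ[U k]) μ :=
    hindep.comp (fun k (y : ℝ) => y - ∫ ω, U k ω ∂μ) fun _ => measurable_sub_const _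
  have hsum := (HasSubgaussianMGF.sum_of_iIndepFun hcentered (s := Finset.univ) fun k _ =>
    hasSubgaussianMGF_ksCoeff_of_mem_Icc (hab k) (hmeas k).aemeasurable (hbdd k))
    |>.measureReal_abs_ge_le hr
  have hproxy : ((∑ k, (2 * ksCoeff ((μ[U k] - a k) / (b k - a k)) * (b k - a k) ^ 2).toNNReal :
      NNReal) : ℝ) = 2 * ∑ k, ksCoeff ((μ[U k] - a k) / (b k - a k)) * (b k - a k) ^ 2 := by
    rw [NNReal.coe_sum, Finset.mul_sum]
    refine Finset.sum_congr rfl fun k _ => ?_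
    rw [Real.coe_toNNReal _ (mul_nonneg (mul_nonneg zero_le_two (ksCoeff_nonneg _)) (sq_nonneg _)),
      mul_assoc]
  simp only [Finset.sum_sub_distrib] at hsum
  rw [← ofReal_measureReal]
  refine ENNReal.ofReal_le_ofReal (hsum.trans_eq ?_)
  rw [hproxy]
  ring_nf
end

section
/- Let (X_k, F_k)_{k=0}^n be a real-valued martingale such that, for some constants d, σ > 0, the conditions |X_k − X_{k−1}| ≤ d and E[(X_k − X_{k−1})² | F_{k−1}] ≤ σ² hold almost surely for every k ∈ {1,...,n}. Let γ = σ²/d² and, for α ≥ 0, let δ = α/d. Then for every α ≥ 0, P(|X_n − X_0| ≥ αn) ≤ 2 exp(−n · d((δ+γ)/(1+γ) ‖ γ/(1+γ))), where d(p‖q) = p ln(p/q) + (1−p) ln((1−p)/(1−q)) is the binary relative entropy. Moreover, if δ > 1 then P(|X_n − X_0| ≥ αn) = 0. -/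
/-!
Bennett's argument. Put `γ = σ²/d²`. Since `(eˣ - 1 - x)/x²` is increasing, the quadratic tangent
to `y ↦ e^{ly}` at `-γd` that meets it again at `d` lies above it on `(-∞, d]`. Taking conditional
expectations, an increment with `|Y| ≤ d`, conditional mean `0` and conditional second moment
`≤ σ²` has conditional MGF at most `M(l)`, the MGF of the two-point law on `{-γd, d}` with mean
`0` and variance `σ²`. By the tower property `E e^{l(X_n - X_0)} ≤ M(l)ⁿ`, and Chernoff's bound
for `±(X_n - X_0)` gives `P(|X_n - X_0| ≥ αn) ≤ 2 (e^{-lα} M(l))ⁿ` for every `l ≥ 0`. Minimising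
over `l` gives the relative-entropy exponent, attained when `δ < 1` and reached as `l → ∞` when
`δ = 1`; for `δ > 1` the event is null because `|X_n - X_0| ≤ nd`.
-/

open MeasureTheory ProbabilityTheory

/-- Binary relative entropy `d(p‖q) = p ln(p/q) + (1-p) ln((1-p)/(1-q))`. -/
noncomputable def binDiv (p q : ℝ) : ℝ :=
  p * Real.log (p / q) + (1 - p) * Real.log ((1 - p) / (1 - q))

open Real Filter Topology

/-- `(exp x - 1 - x) / x²`, written as `∫₀¹ (1 - t) e^{xt} dt`: this form is visibly monotone
and has the right value `1/2` at `0`. -/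
noncomputable def expSubOneSubDivSq (x : ℝ) : ℝ := ∫ t in (0 : ℝ)..1, (1 - t) * exp (x * t)

lemma expSubOneSubDivSq_nonneg (x : ℝ) : 0 ≤ expSubOneSubDivSq x :=
  intervalIntegral.integral_nonneg zero_le_one fun _ ht =>
    mul_nonneg (sub_nonneg.2 ht.2) (exp_pos _).le

lemma expSubOneSubDivSq_mono : Monotone expSubOneSubDivSq := fun x y hxy =>
  intervalIntegral.integral_mono_on zero_le_one
    ((by fun_prop : Continuous _).intervalIntegrable _ _)
    ((by fun_prop : Continuous _).intervalIntegrable _ _) fun t ht =>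
    mul_le_mul_of_nonneg_left (exp_le_exp.2 (mul_le_mul_of_nonneg_right hxy ht.1))
      (sub_nonneg.2 ht.2)

lemma sq_mul_expSubOneSubDivSq (x : ℝ) : x ^ 2 * expSubOneSubDivSq x = exp x - 1 - x := by
  have hderiv : ∀ t ∈ Set.uIcc (0 : ℝ) 1, HasDerivAt (fun t => exp (x * t) * (x + 1 - x * t))
      (x ^ 2 * ((1 - t) * exp (x * t))) t := fun t _ => by
    refine ((hasDerivAt_const_mul x).exp.mul
      ((hasDerivAt_const_mul x).const_sub (x + 1))).congr_deriv ?_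
    ring
  rw [expSubOneSubDivSq, ← intervalIntegral.integral_const_mul,
    intervalIntegral.integral_eq_sub_of_hasDerivAt hderiv
    ((by fun_prop : Continuous _).intervalIntegrable _ _)]
  simp only [mul_one, add_sub_cancel_left, mul_zero, exp_zero, sub_zero, one_mul]
  ring

lemma exp_le_one_add_add_mul_sq {x D : ℝ} (hxD : x ≤ D) :
    exp x ≤ 1 + x + expSubOneSubDivSq D * x ^ 2 := by
  have := mul_le_mul_of_nonneg_left (expSubOneSubDivSq_mono hxD) (sq_nonneg x)
  rw [sq_mul_expSubOneSubDivSq] at this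
  linarith

/-- `(γ e^{ld} + e^{-lγd}) / (1 + γ)`, the MGF at `l` of the law with masses `γ/(1+γ)` at `d`
and `1/(1+γ)` at `-γd`: the extremal law with mean `0` and variance `γd²` on `(-∞, d]`. -/
noncomputable def twoPointMGF (d γ l : ℝ) : ℝ :=
  exp (-(l * γ * d)) * (1 + γ * exp (l * d * (1 + γ))) / (1 + γ)

lemma twoPointMGF_pos {d γ : ℝ} (hγ : 0 ≤ γ) (l : ℝ) : 0 < twoPointMGF d γ l := by
  unfold twoPointMGF
  positivity

lemma exists_quadratic_ge_exp_mul {d γ l : ℝ} (hγ : 0 ≤ γ) (hl : 0 ≤ l) :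
    ∃ a b c : ℝ, 0 ≤ c ∧ a + c * (γ * d ^ 2) = twoPointMGF d γ l ∧
      ∀ y ≤ d, exp (l * y) ≤ a + b * y + c * y ^ 2 := by
  -- the quadratic tangent to `exp (l ·)` at `u` that meets it again at `d`
  set u := -(γ * d)
  set D := l * d * (1 + γ)
  set c := exp (l * u) * l ^ 2 * expSubOneSubDivSq D
  refine ⟨exp (l * u) * (1 - l * u) + c * u ^ 2, exp (l * u) * l - 2 * c * u, c,
    mul_nonneg (by positivity) (expSubOneSubDivSq_nonneg D), ?_, fun y hy => ?_⟩
  · have hD := sq_mul_expSubOneSubDivSq D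
    have hu : l * u = -(l * γ * d) := by ring
    simp only [twoPointMGF, c, hu]
    field_simp
    simp only [u, D] at hD ⊢
    linear_combination γ * hD
  · have hyD : l * (y - u) ≤ D := by
      simp only [D, u]; nlinarith
    calc exp (l * y) = exp (l * u) * exp (l * (y - u)) := by rw [← exp_add]; ring_nf
      _ ≤ exp (l * u) * (1 + l * (y - u) + expSubOneSubDivSq D * (l * (y - u)) ^ 2) :=
        mul_le_mul_of_nonneg_left (exp_le_one_add_add_mul_sq hyD) (exp_pos _).le
      _ = _ := by ring

lemma ae_norm_exp_mul_le {Ω : Type*} {m0 : MeasurableSpace Ω} {μ : Measure Ω} {Y : Ω → ℝ}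
    {d l : ℝ} (hl : 0 ≤ l) (hYd : ∀ᵐ ω ∂μ, |Y ω| ≤ d) :
    ∀ᵐ ω ∂μ, ‖exp (l * Y ω)‖ ≤ exp (l * d) := by
  filter_upwards [hYd] with ω h
  rw [Real.norm_of_nonneg (exp_pos _).le]
  exact exp_le_exp.2 (mul_le_mul_of_nonneg_left (abs_le.1 h).2 hl)

section Conditional

variable {Ω : Type*} {m m0 : MeasurableSpace Ω} {μ : Measure Ω} [IsFiniteMeasure μ]

lemma condExp_exp_mul_le_twoPointMGF (hm : m ≤ m0) {Y : Ω → ℝ} {d γ l : ℝ} (hγ : 0 ≤ γ)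
    (hl : 0 ≤ l) (hY : AEStronglyMeasurable Y μ) (hYd : ∀ᵐ ω ∂μ, |Y ω| ≤ d)
    (hmean : μ[Y|m] =ᵐ[μ] 0) (hvar : ∀ᵐ ω ∂μ, μ[fun ω => Y ω ^ 2|m] ω ≤ γ * d ^ 2) :
    μ[fun ω => exp (l * Y ω)|m] ≤ᵐ[μ] fun _ => twoPointMGF d γ l := by
  obtain ⟨a, b, c, hc, habc, hquad⟩ := exists_quadratic_ge_exp_mul (d := d) hγ hl
  have hYi : Integrable Y μ := .of_bound hY d (by simpa only [Real.norm_eq_abs] using hYd)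
  have hY2i : Integrable (fun ω => Y ω ^ 2) μ := by
    refine .of_bound (hY.pow 2) (d ^ 2) ?_
    filter_upwards [hYd] with ω h
    simpa only [norm_pow, Real.norm_eq_abs] using pow_le_pow_left₀ (abs_nonneg _) h 2
  have hexpi : Integrable (fun ω => exp (l * Y ω)) μ :=
    .of_bound (continuous_exp.comp_aestronglyMeasurable (hY.const_mul l)) _
      (ae_norm_exp_mul_le hl hYd)
  have hmaj : (fun ω => exp (l * Y ω)) ≤ᵐ[μ] fun ω => a + b * Y ω + c * Y ω ^ 2 := by
    filter_upwards [hYd] with ω h using hquad _ (abs_le.1 h).2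
  have hlin : μ[fun ω => a + b * Y ω + c * Y ω ^ 2|m] =ᵐ[μ]
      fun ω => a + b * μ[Y|m] ω + c * μ[fun ω => Y ω ^ 2|m] ω := by
    filter_upwards [condExp_add ((integrable_const a).add (hYi.const_mul b)) (hY2i.const_mul c) m,
      condExp_add (integrable_const a) (hYi.const_mul b) m, condExp_smul b Y m,
      condExp_smul c (fun ω => Y ω ^ 2) m] with ω h₁ h₂ h₃ h₄
    simp only [Pi.add_apply, Pi.smul_apply, smul_eq_mul, condExp_const hm] at h₁ h₂ h₃ h₄
    exact h₁.trans (h₂ ▸ congrArg₂ (· + ·) (congrArg (a + ·) h₃) h₄)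
  have hquadi : Integrable (fun ω => a + b * Y ω + c * Y ω ^ 2) μ :=
    ((integrable_const a).add (hYi.const_mul b)).add (hY2i.const_mul c)
  filter_upwards [condExp_mono hexpi hquadi hmaj, hlin, hmean, hvar] with ω hmono hω hmean hvar
  rw [← habc]
  calc _ ≤ _ := hmono
    _ = a + c * μ[fun ω => Y ω ^ 2|m] ω := by rw [hω, hmean, Pi.zero_apply, mul_zero, add_zero]
    _ ≤ a + c * (γ * d ^ 2) := by gcongr

lemma integral_mul_le_of_condExp_le (hm : m ≤ m0) {Z W : Ω → ℝ} {B : ℝ}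
    (hZ : StronglyMeasurable[m] Z) (hZ0 : ∀ ω, 0 ≤ Z ω) (hZi : Integrable Z μ)
    (hWi : Integrable W μ) (hZWi : Integrable (Z * W) μ) (hWB : μ[W|m] ≤ᵐ[μ] fun _ => B) :
    ∫ ω, Z ω * W ω ∂μ ≤ B * ∫ ω, Z ω ∂μ := by
  have hpull := condExp_mul_of_stronglyMeasurable_left hZ hZWi hWi
  change ∫ ω, (Z * W) ω ∂μ ≤ _
  rw [← integral_condExp hm, integral_congr_ae hpull, ← integral_const_mul]
  refine integral_mono_ae ((integrable_condExp).congr hpull) (hZi.const_mul B) ?_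
  filter_upwards [hWB] with ω hω
  simpa only [Pi.mul_apply, mul_comm B] using mul_le_mul_of_nonneg_left hω (hZ0 ω)

end Conditional

section Martingale

variable {Ω : Type*} {m0 : MeasurableSpace Ω} {μ : Measure Ω}
  {ℱ : Filtration ℕ m0} {X : ℕ → Ω → ℝ}

lemma measure_abs_sub_ge_eq_zero {n : ℕ} (hn : 0 < n) {d α : ℝ}
    (hjump : ∀ k ∈ Finset.Icc 1 n, ∀ᵐ ω ∂μ, |X k ω - X (k - 1) ω| ≤ d) (hdα : d < α) :
    μ {ω | α * n ≤ |X n ω - X 0 ω|} = 0 := by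
  rw [measure_eq_zero_iff_ae_notMem]
  filter_upwards [(ae_ball_iff (Finset.Icc 1 n).countable_toSet).2 hjump] with ω hω
  have htele : dist (X 0 ω) (X n ω) ≤ ∑ _ ∈ Finset.range n, d :=
    dist_le_range_sum_of_dist_le (f := fun k => X k ω) (d := fun _ => d) n fun {k} hk => by
      simpa [Real.dist_eq, abs_sub_comm] using hω (k + 1) (Finset.mem_Icc.2 ⟨k.succ_pos, hk⟩)
  rw [Finset.sum_const, Finset.card_range, nsmul_eq_mul, Real.dist_eq, abs_sub_comm] at htele
  simp only [not_le]
  calc |X n ω - X 0 ω| ≤ n * d := htele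
    _ < α * n := by rw [mul_comm]; exact mul_lt_mul_of_pos_right hdα (Nat.cast_pos.2 hn)

lemma MeasureTheory.Martingale.condExp_succ_sub_ae_eq_zero (hX : Martingale X ℱ μ) (n : ℕ) :
    μ[X (n + 1) - X n|ℱ n] =ᵐ[μ] 0 := by
  filter_upwards [condExp_sub (hX.integrable (n + 1)) (hX.integrable n) (ℱ n),
    hX.condExp_ae_eq n.le_succ, hX.condExp_ae_eq le_rfl] with ω hsub hnext hcur
  rw [hsub, Pi.sub_apply, hnext, hcur, sub_self, Pi.zero_apply]

lemma MeasureTheory.Martingale.integral_exp_mul_sub_le [IsProbabilityMeasure μ]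
    (hX : Martingale X ℱ μ) {n : ℕ} {d γ l : ℝ} (hγ : 0 ≤ γ) (hl : 0 ≤ l)
    (hjump : ∀ k ∈ Finset.Icc 1 n, ∀ᵐ ω ∂μ, |X k ω - X (k - 1) ω| ≤ d)
    (hvar : ∀ k ∈ Finset.Icc 1 n, ∀ᵐ ω ∂μ,
      μ[fun ω' => (X k ω' - X (k - 1) ω') ^ 2|ℱ (k - 1)] ω ≤ γ * d ^ 2) :
    Integrable (fun ω => exp (l * (X n ω - X 0 ω))) μ ∧
      ∫ ω, exp (l * (X n ω - X 0 ω)) ∂μ ≤ twoPointMGF d γ l ^ n := by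
  induction n with
  | zero => simp
  | succ n ih =>
    have hmem : n + 1 ∈ Finset.Icc 1 (n + 1) := Finset.mem_Icc.2 ⟨n.succ_pos, le_rfl⟩
    have hsub : Finset.Icc 1 n ⊆ Finset.Icc 1 (n + 1) := Finset.Icc_subset_Icc_right n.le_succ
    obtain ⟨hZi, hZ⟩ := ih (fun k hk => hjump k (hsub hk)) (fun k hk => hvar k (hsub hk))
    have hYd : ∀ᵐ ω ∂μ, |(X (n + 1) - X n) ω| ≤ d := by simpa using hjump _ hmem
    have hYvar : ∀ᵐ ω ∂μ, μ[fun ω => (X (n + 1) - X n) ω ^ 2|ℱ n] ω ≤ γ * d ^ 2 := by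
      simpa using hvar _ hmem
    have hY : AEStronglyMeasurable (X (n + 1) - X n) μ :=
      ((hX.integrable _).sub (hX.integrable _)).aestronglyMeasurable
    have hWB := condExp_exp_mul_le_twoPointMGF (ℱ.le n) hγ hl hY hYd
      (hX.condExp_succ_sub_ae_eq_zero n) hYvar
    have hW : AEStronglyMeasurable (fun ω => exp (l * (X (n + 1) - X n) ω)) μ :=
      continuous_exp.comp_aestronglyMeasurable (hY.const_mul l)
    have hWbdd := ae_norm_exp_mul_le hl hYd
    have hZWi := hZi.mul_bdd hW hWbdd
    have hZm : StronglyMeasurable[ℱ n] fun ω => exp (l * (X n ω - X 0 ω)) :=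
      continuous_exp.comp_stronglyMeasurable (((hX.stronglyAdapted n).sub
        ((hX.stronglyAdapted 0).mono (ℱ.mono n.zero_le))).const_mul l)
    have hsplit : (fun ω => exp (l * (X (n + 1) ω - X 0 ω))) =
        fun ω => exp (l * (X n ω - X 0 ω)) * exp (l * (X (n + 1) - X n) ω) := by
      ext ω; rw [← exp_add, Pi.sub_apply]; ring_nf
    rw [hsplit]
    refine ⟨hZWi, ?_⟩
    calc _ ≤ twoPointMGF d γ l * ∫ ω, exp (l * (X n ω - X 0 ω)) ∂μ :=
          integral_mul_le_of_condExp_le (ℱ.le n) hZm (fun _ => (exp_pos _).le) hZi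
            (.of_bound hW _ hWbdd) hZWi hWB
      _ ≤ twoPointMGF d γ l * twoPointMGF d γ l ^ n :=
          mul_le_mul_of_nonneg_left hZ (twoPointMGF_pos hγ l).le
      _ = twoPointMGF d γ l ^ (n + 1) := (pow_succ' _ _).symm

lemma MeasureTheory.Martingale.measureReal_sub_ge_le [IsProbabilityMeasure μ]
    (hX : Martingale X ℱ μ) {n : ℕ} {d γ l : ℝ} (α : ℝ) (hγ : 0 ≤ γ) (hl : 0 ≤ l)
    (hjump : ∀ k ∈ Finset.Icc 1 n, ∀ᵐ ω ∂μ, |X k ω - X (k - 1) ω| ≤ d)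
    (hvar : ∀ k ∈ Finset.Icc 1 n, ∀ᵐ ω ∂μ,
      μ[fun ω' => (X k ω' - X (k - 1) ω') ^ 2|ℱ (k - 1)] ω ≤ γ * d ^ 2) :
    μ.real {ω | α * n ≤ X n ω - X 0 ω} ≤ (exp (-(l * α)) * twoPointMGF d γ l) ^ n := by
  obtain ⟨hint, hmgf⟩ := hX.integral_exp_mul_sub_le hγ hl hjump hvar
  calc _ ≤ exp (-l * (α * n)) * mgf (fun ω => X n ω - X 0 ω) μ l :=
        measure_ge_le_exp_mul_mgf _ hl hint
    _ ≤ exp (-l * (α * n)) * twoPointMGF d γ l ^ n :=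
        mul_le_mul_of_nonneg_left hmgf (exp_pos _).le
    _ = _ := by rw [mul_pow, ← exp_nat_mul]; ring_nf

lemma MeasureTheory.Martingale.measureReal_abs_sub_ge_le [IsProbabilityMeasure μ]
    (hX : Martingale X ℱ μ) {n : ℕ} {d γ l : ℝ} (α : ℝ) (hγ : 0 ≤ γ) (hl : 0 ≤ l)
    (hjump : ∀ k ∈ Finset.Icc 1 n, ∀ᵐ ω ∂μ, |X k ω - X (k - 1) ω| ≤ d)
    (hvar : ∀ k ∈ Finset.Icc 1 n, ∀ᵐ ω ∂μ,
      μ[fun ω' => (X k ω' - X (k - 1) ω') ^ 2|ℱ (k - 1)] ω ≤ γ * d ^ 2) :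
    μ.real {ω | α * n ≤ |X n ω - X 0 ω|} ≤ 2 * (exp (-(l * α)) * twoPointMGF d γ l) ^ n := by
  have hupper := hX.measureReal_sub_ge_le α hγ hl hjump hvar
  have hlower := hX.neg.measureReal_sub_ge_le α hγ hl
    (fun k hk => by simpa only [Pi.neg_apply, neg_sub_neg, abs_sub_comm] using hjump k hk)
    (fun k hk => by simpa only [Pi.neg_apply, neg_sub_neg, sub_sq_comm] using hvar k hk)
  calc μ.real {ω | α * n ≤ |X n ω - X 0 ω|}
      ≤ μ.real ({ω | α * n ≤ X n ω - X 0 ω} ∪ {ω | α * n ≤ (-X) n ω - (-X) 0 ω}) := by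
        refine measureReal_mono fun ω (hω : α * n ≤ |X n ω - X 0 ω|) => ?_
        rcases le_abs'.1 hω with h | h
        · exact Or.inr (show α * n ≤ -X n ω - -X 0 ω by linarith)
        · exact Or.inl h
    _ ≤ _ := measureReal_union_le _ _
    _ ≤ _ := by linarith

end Martingale

lemma exists_exp_neg_mul_twoPointMGF_eq_exp_neg_binDiv {d γ α : ℝ} (hd : 0 < d) (hγ : 0 < γ)
    (hα : 0 ≤ α) (hαd : α / d < 1) :
    ∃ l, 0 ≤ l ∧ exp (-(l * α)) * twoPointMGF d γ l =
      exp (-binDiv ((α / d + γ) / (1 + γ)) (γ / (1 + γ))) := by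
  set δ := α / d
  have hδ : 0 ≤ δ := by positivity
  have hδ1 : 0 < 1 - δ := by linarith
  -- `ρ = e^{l d (1 + γ)}` at the minimiser `l` of `e^{-lα} M(l)`
  set ρ := (γ + δ) / (γ * (1 - δ))
  have hρ : 1 ≤ ρ := by rw [le_div_iff₀ (by positivity)]; nlinarith
  refine ⟨log ρ / (d * (1 + γ)), by have := log_nonneg hρ; positivity, ?_⟩
  set l := log ρ / (d * (1 + γ))
  have hlog : l * d * (1 + γ) = log ρ := by simp only [l]; field_simp
  have hexp : exp (l * d * (1 + γ)) = ρ := by rw [hlog, exp_log (by linarith)]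
  have hlα : l * α = l * d * δ := by simp only [δ]; field_simp
  have hbin : binDiv ((δ + γ) / (1 + γ)) (γ / (1 + γ)) = l * d * (δ + γ) + log (1 - δ) := by
    have hpq : (δ + γ) / (1 + γ) / (γ / (1 + γ)) = ρ * (1 - δ) := by
      simp only [ρ]; field_simp; ring
    have hpq' : (1 - (δ + γ) / (1 + γ)) / (1 - γ / (1 + γ)) = 1 - δ := by field_simp; ring
    rw [binDiv, hpq, hpq', log_mul (by positivity) hδ1.ne', ← hlog]
    field_simp
    ring
  have h1γρ : 1 + γ * ρ = (1 + γ) / (1 - δ) := by simp only [ρ]; field_simp; ring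
  have hsplit : exp (-(l * d * (δ + γ))) = exp (-(l * d * δ)) * exp (-(l * γ * d)) := by
    rw [← exp_add]; ring_nf
  rw [twoPointMGF, hexp, h1γρ, hbin, hlα, neg_add, exp_add, exp_neg (log _), exp_log hδ1, hsplit]
  field_simp

lemma tendsto_exp_neg_mul_twoPointMGF_atTop {d γ : ℝ} (hd : 0 < d) (hγ : 0 < γ) :
    Tendsto (fun l => exp (-(l * d)) * twoPointMGF d γ l) atTop
      (𝓝 (exp (-binDiv 1 (γ / (1 + γ))))) := by
  have heq : (fun l => exp (-(l * d)) * twoPointMGF d γ l) =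
      fun l => (exp (-(l * (d * (1 + γ)))) + γ) / (1 + γ) := by
    ext l
    have hinv : exp (-(l * d)) * exp (-(l * γ * d)) = (exp (l * d * (1 + γ)))⁻¹ := by
      rw [← exp_add, ← exp_neg]; ring_nf
    rw [twoPointMGF, ← mul_div_assoc, ← mul_assoc, hinv, exp_neg]
    field_simp
  have hlim : exp (-binDiv 1 (γ / (1 + γ))) = (0 + γ) / (1 + γ) := by
    rw [binDiv, sub_self, zero_mul, add_zero, one_mul, one_div, log_inv, neg_neg,
      exp_log (by positivity), zero_add]
  rw [heq, hlim]
  exact ((tendsto_exp_atBot.comp (tendsto_neg_atTop_atBot.comp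
    (tendsto_id.atTop_mul_const (by positivity)))).add_const γ).div_const (1 + γ)

/-- Refined Azuma–Hoeffding inequality for martingales with bounded jumps and a bound on the
conditional variance. With `γ = σ²/d²` and `δ = α/d`,
`P(|X_n - X_0| ≥ αn) ≤ 2 exp(-n d((δ+γ)/(1+γ) ‖ γ/(1+γ)))`; moreover if `δ > 1` the
probability is zero. -/
theorem refined_azuma_with_variance {Ω : Type*} {m0 : MeasurableSpace Ω} {μ : Measure Ω}
    [IsProbabilityMeasure μ] {ℱ : Filtration ℕ m0} {X : ℕ → Ω → ℝ}
    (hX : Martingale X ℱ μ) {n : ℕ} (hn : 0 < n) {d σ : ℝ} (hd : 0 < d) (hσ : 0 < σ)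
    (hjump : ∀ k ∈ Finset.Icc 1 n, ∀ᵐ ω ∂μ, |X k ω - X (k-1) ω| ≤ d)
    (hvar : ∀ k ∈ Finset.Icc 1 n, ∀ᵐ ω ∂μ,
      (μ[fun ω' => (X k ω' - X (k-1) ω')^2 | ℱ (k-1)]) ω ≤ σ^2)
    {α : ℝ} (hα : 0 ≤ α) :
    μ {ω | α * n ≤ |X n ω - X 0 ω|} ≤
      ENNReal.ofReal (2 * Real.exp (-(n : ℝ) *
        binDiv ((α/d + σ^2/d^2) / (1 + σ^2/d^2)) ((σ^2/d^2) / (1 + σ^2/d^2)))) ∧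
    (1 < α/d → μ {ω | α * n ≤ |X n ω - X 0 ω|} = 0) := by
  have hzero : 1 < α / d → μ {ω | α * n ≤ |X n ω - X 0 ω|} = 0 := fun h =>
    measure_abs_sub_ge_eq_zero hn hjump ((one_lt_div hd).1 h)
  refine ⟨?_, hzero⟩
  set γ := σ ^ 2 / d ^ 2
  have hγ : 0 < γ := by positivity
  rw [show σ ^ 2 = γ * d ^ 2 by simp only [γ]; field_simp] at hvar
  have htail : ∀ l, 0 ≤ l → μ.real {ω | α * n ≤ |X n ω - X 0 ω|} ≤
      2 * (exp (-(l * α)) * twoPointMGF d γ l) ^ n := fun l hl =>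
    hX.measureReal_abs_sub_ge_le α hγ.le hl hjump hvar
  rw [← ofReal_measureReal, neg_mul, ← mul_neg, exp_nat_mul]
  refine ENNReal.ofReal_le_ofReal ?_
  rcases lt_trichotomy (α / d) 1 with hlt | heq | hgt
  · obtain ⟨l, hl, hopt⟩ := exists_exp_neg_mul_twoPointMGF_eq_exp_neg_binDiv hd hγ hα hlt
    exact hopt ▸ htail l hl
  · obtain rfl : α = d := (div_eq_one_iff_eq hd.ne').1 heq
    rw [heq, div_self (by positivity : (1 + γ) ≠ 0)]
    refine ge_of_tendsto (((tendsto_exp_neg_mul_twoPointMGF_atTop hd hγ).pow n).const_mul 2) ?_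
    filter_upwards [eventually_ge_atTop 0] with l hl using htail l hl
  · rw [measureReal_def, hzero hgt, ENNReal.toReal_zero]
    positivity
end

section
/- Let X_1, ..., X_n be independent random variables taking values in a standard Borel space X with joint (product) distribution P, and let f : X^n → ℝ be a measurable function such that exp(λ f(X^n)) is integrable for every λ ∈ ℝ. For i ∈ {1,...,n} and x̄^i = (x_1,...,x_{i−1},x_{i+1},...,x_n) ∈ X^{n−1}, define f_i(y | x̄^i) = f(x_1,...,x_{i−1},y,x_{i+1},...,x_n) for y ∈ X. Suppose there exist constants c_1, ..., c_n > 0 such that for every t > 0, every i ∈ {1,...,n} and every x̄^i ∈ X^{n−1}, D(P_{X_i}^{(t f_i(·|x̄^i))} ‖ P_{X_i}) ≤ c_i t² / 2. Then for every r > 0, P(f(X^n) − E[f(X^n)] ≥ r) ≤ exp(−r² / (2 Σ_{i=1}^n c_i)). -/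
/-!
For `ψ` the cumulant generating function of a function `g` of one coordinate, the divergence of
the `s`-tilted law from the original one is `s ψ'(s) - ψ(s)`. The hypothesis therefore makes
`s ↦ ψ(s)/s - c s/2` nonincreasing on `(0, ∞)`, and letting `s → 0⁺` gives Herbst's bound
`ψ(t) ≤ t E[g] + c t²/2`, i.e. `E exp(t (g - E g)) ≤ exp(c t²/2)` in every coordinate.

These one-coordinate bounds tensorize: integrating out coordinate `i` costs the factor
`exp(cᵢ t²/2)`, and by Jensen's inequality the partially integrated function still satisfies the
bounds in the remaining coordinates. Hence `E exp(t (f - E f)) ≤ exp(t² ∑ cᵢ/2)`, and Chernoff's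
bound with `t = r / ∑ cᵢ` concludes.
-/

open MeasureTheory ProbabilityTheory
open scoped ENNReal NNReal Classical

/-- The relative entropy (Kullback–Leibler divergence) `D(Q‖P)`, equal to
`∫ ln(dQ/dP) dQ` when `Q ≪ P` (and the log-likelihood ratio is integrable), and `+∞`
otherwise. -/
noncomputable def relEnt {α : Type*} [MeasurableSpace α] (Q P : Measure α) : ℝ≥0∞ :=
  if Q ≪ P ∧ Integrable (fun x => Real.log (Q.rnDeriv P x).toReal) Q
  then ENNReal.ofReal (∫ x, Real.log (Q.rnDeriv P x).toReal ∂Q) else ⊤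

open Real Function Filter Topology

/-- Valued in `ℝ≥0∞`, so that it makes sense without integrability of `exp (t * X)`. -/
noncomputable def centredMGF {Ω : Type*} [MeasurableSpace Ω] (X : Ω → ℝ) (μ : Measure Ω)
    (t : ℝ) : ℝ≥0∞ :=
  ∫⁻ ω, ENNReal.ofReal (exp (t * (X ω - μ[X]))) ∂μ

section CentredMGF

variable {Ω α β : Type*} [MeasurableSpace Ω] [MeasurableSpace α] [MeasurableSpace β]

lemma ofReal_exp_integral_le_lintegral {μ : Measure Ω} [IsProbabilityMeasure μ] {u : Ω → ℝ}
    (hu : Integrable u μ) :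
    ENNReal.ofReal (exp (∫ ω, u ω ∂μ)) ≤ ∫⁻ ω, ENNReal.ofReal (exp (u ω)) ∂μ := by
  have hpos : 0 ≤ᵐ[μ] fun ω => exp (u ω) := .of_forall fun _ => (exp_pos _).le
  rcases eq_top_or_lt_top (∫⁻ ω, ENNReal.ofReal (exp (u ω)) ∂μ) with hinf | hfin
  · exact hinf ▸ le_top
  · have hexp : Integrable (fun ω => exp (u ω)) μ :=
      ⟨continuous_exp.comp_aestronglyMeasurable hu.1, (hasFiniteIntegral_iff_ofReal hpos).2 hfin⟩
    rw [← ofReal_integral_eq_lintegral_ofReal hexp hpos]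
    exact ENNReal.ofReal_le_ofReal <| convexOn_exp.map_integral_le continuous_exp.continuousOn
      isClosed_univ (.of_forall fun _ => Set.mem_univ _) hu hexp

lemma centredMGF_eq_ofReal_exp_cgf {μ : Measure Ω} [IsProbabilityMeasure μ] {X : Ω → ℝ} {t : ℝ}
    (ht : Integrable (fun ω => exp (t * X ω)) μ) :
    centredMGF X μ t = ENNReal.ofReal (exp (cgf X μ t - t * μ[X])) := by
  have hint : Integrable (fun ω => exp (t * (X ω - μ[X]))) μ := by
    simpa only [mul_sub, exp_sub] using ht.div_const (exp (t * μ[X]))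
  rw [centredMGF, ← ofReal_integral_eq_lintegral_ofReal hint (.of_forall fun _ => (exp_pos _).le),
    exp_sub, exp_cgf ht]
  simp only [mul_sub, exp_sub]
  rw [integral_div, mgf]

lemma measure_le_sub_integral_le_exp_mul_centredMGF {μ : Measure Ω} {X : Ω → ℝ}
    (hX : AEMeasurable X μ) (r : ℝ) {t : ℝ} (ht : 0 ≤ t) :
    μ {ω | r ≤ X ω - μ[X]} ≤ ENNReal.ofReal (exp (-t * r)) * centredMGF X μ t := by
  have hmarkov := mul_meas_ge_le_lintegral₀
    (((hX.sub_const μ[X]).const_mul t).exp.ennreal_ofReal) (ENNReal.ofReal (exp (t * r)))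
  calc μ {ω | r ≤ X ω - μ[X]}
      ≤ μ {ω | ENNReal.ofReal (exp (t * r)) ≤ ENNReal.ofReal (exp (t * (X ω - μ[X])))} :=
        measure_mono fun ω hω => ENNReal.ofReal_le_ofReal <| exp_le_exp.2 <|
          mul_le_mul_of_nonneg_left hω ht
    _ = ENNReal.ofReal (exp (-t * r)) * (ENNReal.ofReal (exp (t * r)) *
          μ {ω | ENNReal.ofReal (exp (t * r)) ≤ ENNReal.ofReal (exp (t * (X ω - μ[X])))}) := by
        rw [← mul_assoc, ← ENNReal.ofReal_mul (exp_pos _).le, ← exp_add, neg_mul, neg_add_cancel,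
          exp_zero, ENNReal.ofReal_one, one_mul]
    _ ≤ ENNReal.ofReal (exp (-t * r)) * centredMGF X μ t := by gcongr; exact hmarkov

lemma centredMGF_prod_le {μ : Measure α} {ν : Measure β} [IsProbabilityMeasure μ]
    [IsProbabilityMeasure ν] {G : α × β → ℝ} (hG : Integrable G (μ.prod ν)) (t : ℝ) {B : ℝ≥0∞}
    (hB : ∀ᵐ a ∂μ, centredMGF (fun b => G (a, b)) ν t ≤ B) :
    centredMGF G (μ.prod ν) t ≤ B * centredMGF (fun a => ∫ b, G (a, b) ∂ν) μ t := by
  set H := fun a => ∫ b, G (a, b) ∂ν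
  have hH : AEMeasurable H μ := hG.1.integral_prod_right'.aemeasurable
  have hmeas : AEMeasurable (fun p => ENNReal.ofReal (exp (t * (G p - μ[H])))) (μ.prod ν) :=
    ((hG.1.aemeasurable.sub_const _).const_mul t).exp.ennreal_ofReal
  calc centredMGF G (μ.prod ν) t
      = ∫⁻ a, (∫⁻ b, ENNReal.ofReal (exp (t * (G (a, b) - H a))) ∂ν) *
          ENNReal.ofReal (exp (t * (H a - μ[H]))) ∂μ := by
        rw [centredMGF, integral_prod G hG, lintegral_prod _ hmeas]
        refine lintegral_congr fun a => ?_
        rw [← lintegral_mul_const' _ _ ENNReal.ofReal_ne_top]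
        refine lintegral_congr fun b => ?_
        rw [← ENNReal.ofReal_mul (exp_pos _).le, ← exp_add]
        ring_nf
    _ ≤ ∫⁻ a, B * ENNReal.ofReal (exp (t * (H a - μ[H]))) ∂μ :=
        lintegral_mono_ae <| hB.mono fun a ha => by gcongr; exact ha
    _ = B * centredMGF H μ t :=
        lintegral_const_mul'' B ((hH.sub_const _).const_mul t).exp.ennreal_ofReal

lemma centredMGF_integral_le {μ : Measure α} {ν : Measure β} [IsProbabilityMeasure μ]
    [IsProbabilityMeasure ν] {K : α × β → ℝ} (hK : Integrable K (μ.prod ν)) (t : ℝ) :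
    centredMGF (fun b => ∫ a, K (a, b) ∂μ) ν t ≤ ∫⁻ a, centredMGF (fun b => K (a, b)) ν t ∂μ := by
  set M := fun a => ∫ b, K (a, b) ∂ν
  have hM : Integrable M μ := hK.integral_prod_left
  have hmeas : AEMeasurable (uncurry fun a b => ENNReal.ofReal (exp (t * (K (a, b) - M a))))
      (μ.prod ν) :=
    ((hK.1.aemeasurable.sub (hM.1.aemeasurable.comp_fst)).const_mul t).exp.ennreal_ofReal
  calc centredMGF (fun b => ∫ a, K (a, b) ∂μ) ν t
      ≤ ∫⁻ b, ∫⁻ a, ENNReal.ofReal (exp (t * (K (a, b) - M a))) ∂μ ∂ν := by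
        rw [centredMGF, ← integral_prod_symm K hK, integral_prod K hK]
        refine lintegral_mono_ae <| hK.prod_left_ae.mono fun b hb => ?_
        rw [← integral_sub hb hM, ← integral_const_mul]
        exact ofReal_exp_integral_le_lintegral ((hb.sub hM).const_mul t)
    _ = ∫⁻ a, centredMGF (fun b => K (a, b)) ν t ∂μ := (lintegral_lintegral_swap hmeas).symm

lemma MeasureTheory.MeasurePreserving.centredMGF_comp {μ : Measure α} {ν : Measure β}
    {φ : α → β} (hφ : MeasurePreserving φ μ ν) {g : β → ℝ} (hg : AEStronglyMeasurable g ν) (t : ℝ) :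
    centredMGF (g ∘ φ) μ t = centredMGF g ν t := by
  rw [← hφ.map_eq] at hg ⊢
  rw [centredMGF, centredMGF, integral_map hφ.measurable.aemeasurable hg,
    lintegral_map' ((hg.aemeasurable.sub_const _).const_mul t).exp.ennreal_ofReal
      hφ.measurable.aemeasurable]
  rfl

end CentredMGF

section Herbst

variable {Ω : Type*} [MeasurableSpace Ω]

lemma le_mul_deriv_zero_add_of_mul_deriv_sub_le {ψ : ℝ → ℝ} {c t : ℝ}
    (hψ : ∀ s, 0 ≤ s → DifferentiableAt ℝ ψ s) (h0 : ψ 0 = 0)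
    (h : ∀ s, 0 < s → s * deriv ψ s - ψ s ≤ c * s ^ 2 / 2) (ht : 0 < t) :
    ψ t ≤ t * deriv ψ 0 + c * t ^ 2 / 2 := by
  set φ : ℝ → ℝ := fun s => ψ s / s - c / 2 * s
  have hφ' : ∀ s, 0 < s → HasDerivAt φ ((s * deriv ψ s - ψ s) / s ^ 2 - c / 2) s := fun s hs => by
    refine (((hψ s hs.le).hasDerivAt.div (hasDerivAt_id s) hs.ne').sub
      ((hasDerivAt_id s).const_mul (c / 2))).congr_deriv ?_
    simp only [id, mul_one, mul_comm (deriv ψ s)]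
  have hanti : AntitoneOn φ (Set.Ioi 0) := by
    refine antitoneOn_of_hasDerivWithinAt_nonpos
      (f' := fun s => (s * deriv ψ s - ψ s) / s ^ 2 - c / 2) (convex_Ioi 0)
      (fun s hs => (hφ' s hs).continuousAt.continuousWithinAt) (fun s hs => ?_) fun s hs => ?_
    all_goals rw [interior_Ioi] at *
    · exact (hφ' s hs).hasDerivWithinAt
    · rw [sub_nonpos, div_le_iff₀ (pow_pos hs 2)]
      linarith [h s hs]
  have hlim : Tendsto φ (𝓝[>] 0) (𝓝 (deriv ψ 0)) := by
    have hc : Tendsto (fun s => c / 2 * s) (𝓝[>] 0) (𝓝 0) :=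
      tendsto_nhdsWithin_of_tendsto_nhds (by simpa using (continuous_const_mul (c / 2)).tendsto 0)
    simpa [φ, h0, div_eq_inv_mul] using
      (hψ 0 le_rfl).hasDerivAt.tendsto_slope_zero_right.sub hc
  have hφt : φ t ≤ deriv ψ 0 := ge_of_tendsto hlim <| by
    filter_upwards [Ioo_mem_nhdsGT ht] with s hs using hanti hs.1 ht hs.2.le
  have hψt : ψ t = t * φ t + c * t ^ 2 / 2 := by
    simp only [φ]
    field_simp
    ring
  rw [hψt]
  gcongr

lemma mem_interior_integrableExpSet_of_forall {μ : Measure Ω} {X : Ω → ℝ}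
    (hX : ∀ s, Integrable (fun ω => exp (s * X ω)) μ) (t : ℝ) :
    t ∈ interior (integrableExpSet X μ) := by
  simp [Set.eq_univ_of_forall (s := integrableExpSet X μ) hX]

lemma relEnt_tilted_mul_eq {μ : Measure Ω} [IsProbabilityMeasure μ] {X : Ω → ℝ} {s : ℝ}
    (hs : s ∈ interior (integrableExpSet X μ)) :
    relEnt (μ.tilted (s * X ·)) μ = ENNReal.ofReal (s * deriv (cgf X μ) s - cgf X μ s) := by
  have hexp : Integrable (fun ω => exp (s * X ω)) μ :=
    interior_subset (s := integrableExpSet X μ) hs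
  have : IsProbabilityMeasure (μ.tilted (s * X ·)) := isProbabilityMeasure_tilted hexp
  have hac : μ.tilted (s * X ·) ≪ μ := tilted_absolutelyContinuous μ _
  have hllr : (fun ω => log ((μ.tilted (s * X ·)).rnDeriv μ ω).toReal)
      =ᵐ[μ.tilted (s * X ·)] fun ω => s * X ω - cgf X μ s :=
    hac.ae_eq (log_rnDeriv_tilted_left_self hexp)
  have hX : Integrable X (μ.tilted (s * X ·)) := memLp_one_iff_integrable.1 (memLp_tilted_mul hs 1)
  have hlin : Integrable (fun ω => s * X ω - cgf X μ s) (μ.tilted (s * X ·)) :=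
    (hX.const_mul s).sub (integrable_const _)
  rw [relEnt, if_pos ⟨hac, hlin.congr hllr.symm⟩, integral_congr_ae hllr,
    integral_sub (hX.const_mul s) (integrable_const _), integral_const_mul,
    integral_tilted_mul_self hs]
  simp

lemma cgf_le_of_relEnt_tilted_le {μ : Measure Ω} [IsProbabilityMeasure μ] {X : Ω → ℝ}
    (hX : ∀ s, Integrable (fun ω => exp (s * X ω)) μ) {c : ℝ} (hc : 0 ≤ c)
    (hD : ∀ s, 0 < s → relEnt (μ.tilted (s * X ·)) μ ≤ ENNReal.ofReal (c * s ^ 2 / 2))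
    {t : ℝ} (ht : 0 < t) :
    cgf X μ t ≤ t * μ[X] + c * t ^ 2 / 2 := by
  have hmem := mem_interior_integrableExpSet_of_forall hX
  have key := le_mul_deriv_zero_add_of_mul_deriv_sub_le (c := c)
    (fun s _ => (analyticAt_cgf (hmem s)).differentiableAt) cgf_zero (fun s hs => ?_) ht
  · simpa [deriv_cgf_zero (hmem 0)] using key
  · have := hD s hs
    rwa [relEnt_tilted_mul_eq (hmem s), ENNReal.ofReal_le_ofReal_iff (by positivity)] at this

theorem centredMGF_le_of_relEnt_tilted_le {μ : Measure Ω} [IsProbabilityMeasure μ] {X : Ω → ℝ}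
    (hX : ∀ s, Integrable (fun ω => exp (s * X ω)) μ) {c : ℝ} (hc : 0 ≤ c)
    (hD : ∀ s, 0 < s → relEnt (μ.tilted (s * X ·)) μ ≤ ENNReal.ofReal (c * s ^ 2 / 2))
    {t : ℝ} (ht : 0 < t) :
    centredMGF X μ t ≤ ENNReal.ofReal (exp (c * t ^ 2 / 2)) := by
  rw [centredMGF_eq_ofReal_exp_cgf (hX t)]
  gcongr
  linarith [cgf_le_of_relEnt_tilted_le hX hc hD ht]

lemma integrable_exp_mul_of_forall_int {μ : Measure Ω} {X : Ω → ℝ}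
    (hX : ∀ n : ℤ, Integrable (fun ω => exp (n * X ω)) μ) (t : ℝ) :
    Integrable (fun ω => exp (t * X ω)) μ :=
  convex_integrableExpSet.ordConnected.out (hX ⌊t⌋) (by exact_mod_cast hX (⌊t⌋ + 1))
    ⟨Int.floor_le t, by exact_mod_cast (Int.lt_floor_add_one t).le⟩

end Herbst

lemma DependsOn.integral_update {ι : Type*} [DecidableEq ι] {X : ι → Type*}
    [∀ i, MeasurableSpace (X i)] {E : Type*} [NormedAddCommGroup E] [NormedSpace ℝ E]
    {g : (∀ j, X j) → E} {s : Set ι} {i : ι} (hg : DependsOn g (insert i s)) (μ : Measure (X i)) :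
    DependsOn (fun x => ∫ a, g (Function.update x i a) ∂μ) s := by
  intro x y hxy
  refine congrArg (integral μ) (funext fun a => hg fun j hj => ?_)
  rcases eq_or_ne j i with rfl | hji
  · simp
  · simp [update_of_ne hji, hxy j (hj.resolve_left hji)]

section Tensorization

variable {ι : Type*} [Fintype ι] [DecidableEq ι] {X : ι → Type*} [∀ i, MeasurableSpace (X i)]
  {P : ∀ i, Measure (X i)} [∀ i, IsProbabilityMeasure (P i)]

variable (P) in
theorem measurePreserving_update (i : ι) :
    MeasurePreserving (fun p : (∀ j, X j) × X i => update p.1 i p.2)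
      ((Measure.pi P).prod (P i)) (Measure.pi P) := by
  refine ⟨measurable_update', (Measure.pi_eq fun s hs => ?_).symm⟩
  have hpre : (fun p : (∀ j, X j) × X i => update p.1 i p.2) ⁻¹' Set.univ.pi s
      = Set.univ.pi (update s i Set.univ) ×ˢ s i := by
    ext ⟨x, y⟩
    simp only [Set.mem_preimage, Set.mem_univ_pi, Set.mem_prod]
    refine ⟨fun h => ⟨fun j => ?_, by simpa using h i⟩, fun ⟨h, hy⟩ j => ?_⟩
    · rcases eq_or_ne j i with rfl | hj
      · simp
      · simpa [hj] using h j
    · rcases eq_or_ne j i with rfl | hj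
      · simpa using hy
      · simpa [hj] using h j
  have hprod : ∏ j, P j (update s i Set.univ j) = ∏ j ∈ Finset.univ.erase i, P j (s j) := by
    rw [← Finset.mul_prod_erase _ _ (Finset.mem_univ i), update_self, measure_univ, one_mul]
    exact Finset.prod_congr rfl fun j hj => by rw [update_of_ne (Finset.ne_of_mem_erase hj)]
  rw [Measure.map_apply measurable_update' (.univ_pi hs), hpre, Measure.prod_prod, Measure.pi_pi,
    hprod, mul_comm, Finset.mul_prod_erase _ (fun j => P j (s j)) (Finset.mem_univ i)]

lemma MeasureTheory.Integrable.ae_integrable_update {E : Type*} [NormedAddCommGroup E]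
    {g : (∀ j, X j) → E} (hg : Integrable g (Measure.pi P)) (i : ι) :
    ∀ᵐ x ∂Measure.pi P, Integrable (fun y => g (update x i y)) (P i) :=
  (((measurePreserving_update P i).integrable_comp hg.1).2 hg).prod_right_ae

lemma ae_forall_integrable_exp_mul_update {g : (∀ j, X j) → ℝ}
    (hg : ∀ s, Integrable (fun x => exp (s * g x)) (Measure.pi P)) (i : ι) :
    ∀ᵐ x ∂Measure.pi P, ∀ s, Integrable (fun y => exp (s * g (update x i y))) (P i) := by
  filter_upwards [ae_all_iff.2 fun n : ℤ => (hg n).ae_integrable_update i] with x hx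
  exact integrable_exp_mul_of_forall_int hx

lemma ae_centredMGF_integral_update_le {g : (∀ j, X j) → ℝ} (hg : Integrable g (Measure.pi P))
    {i j : ι} (hij : i ≠ j) (t : ℝ) {B : ℝ≥0∞}
    (hB : ∀ᵐ x ∂Measure.pi P, centredMGF (fun y => g (update x j y)) (P j) t ≤ B) :
    ∀ᵐ x ∂Measure.pi P,
      centredMGF (fun y => ∫ a, g (update (update x j y) i a) ∂P i) (P j) t ≤ B := by
  have hmp : MeasurePreserving (fun p : (∀ k, X k) × (X i × X j) =>
      update (update p.1 i p.2.1) j p.2.2)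
      ((Measure.pi P).prod ((P i).prod (P j))) (Measure.pi P) :=
    (measurePreserving_update P j).comp <| ((measurePreserving_update P i).prod
      (MeasurePreserving.id (P j))).comp (measurePreserving_prodAssoc _ _ _).symm
  have hK := ((hmp.integrable_comp hg.1).2 hg).prod_right_ae
  have hB' := Measure.ae_ae_of_ae_prod ((measurePreserving_update P i).quasiMeasurePreserving.ae hB)
  filter_upwards [hK, hB'] with x hKx hBx
  simp_rw [update_comm hij.symm]
  calc _ ≤ ∫⁻ a, centredMGF (fun y => g (update (update x i a) j y)) (P j) t ∂P i :=
        centredMGF_integral_le hKx t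
    _ ≤ ∫⁻ _, B ∂P i := lintegral_mono_ae hBx
    _ = B := by simp

lemma centredMGF_pi_le_prod_of_dependsOn {g : (∀ i, X i) → ℝ} (hg : Integrable g (Measure.pi P))
    (t : ℝ) (B : ι → ℝ≥0∞) {S : Finset ι} (hdep : DependsOn g S)
    (hB : ∀ i ∈ S, ∀ᵐ x ∂Measure.pi P, centredMGF (fun y => g (update x i y)) (P i) t ≤ B i) :
    centredMGF g (Measure.pi P) t ≤ ∏ i ∈ S, B i := by
  induction S using Finset.induction_on generalizing g with
  | empty =>
    have hconst : ∀ x, (Measure.pi P)[g] = g x := fun x => by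
      rw [integral_congr_ae (.of_forall fun y => (Finset.coe_empty ▸ hdep).empty y x)]
      simp
    calc centredMGF g (Measure.pi P) t = ∫⁻ _, 1 ∂Measure.pi P :=
          lintegral_congr fun x => by
            rw [hconst x, sub_self, mul_zero, exp_zero, ENNReal.ofReal_one]
      _ ≤ ∏ i ∈ ∅, B i := by simp
  | insert i S hi IH =>
    have hmp := measurePreserving_update P i
    have hgu := (hmp.integrable_comp hg.1).2 hg
    calc centredMGF g (Measure.pi P) t
        = centredMGF (g ∘ fun p => update p.1 i p.2) ((Measure.pi P).prod (P i)) t :=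
          (hmp.centredMGF_comp hg.1 t).symm
      _ ≤ B i * centredMGF (fun x => ∫ a, g (update x i a) ∂P i) (Measure.pi P) t :=
          centredMGF_prod_le hgu t (hB i (Finset.mem_insert_self i S))
      _ ≤ B i * ∏ j ∈ S, B j := by
          gcongr
          refine IH hgu.integral_prod_left (DependsOn.integral_update (by simpa using hdep) _)
            fun j hj => ?_
          exact ae_centredMGF_integral_update_le hg (ne_of_mem_of_not_mem hj hi).symm t
            (hB j (Finset.mem_insert_of_mem hj))
      _ = ∏ j ∈ insert i S, B j := (Finset.prod_insert hi).symm

theorem centredMGF_pi_le_prod {g : (∀ i, X i) → ℝ} (hg : Integrable g (Measure.pi P)) (t : ℝ)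
    (B : ι → ℝ≥0∞)
    (hB : ∀ i, ∀ᵐ x ∂Measure.pi P, centredMGF (fun y => g (update x i y)) (P i) t ≤ B i) :
    centredMGF g (Measure.pi P) t ≤ ∏ i, B i :=
  centredMGF_pi_le_prod_of_dependsOn hg t B (by simpa using dependsOn_univ g) fun i _ => hB i

end Tensorization

theorem concentration_from_local_tilted_bounds_general {𝓧 : Type*} [MeasurableSpace 𝓧] {n : ℕ}
    (P : Fin n → Measure 𝓧) [∀ i, IsProbabilityMeasure (P i)]
    (f : (Fin n → 𝓧) → ℝ)
    (hexp : ∀ lam : ℝ, Integrable (fun x => Real.exp (lam * f x)) (Measure.pi P))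
    (c : Fin n → ℝ) (hc : ∀ i, 0 < c i)
    (hLSI : ∀ t : ℝ, 0 < t → ∀ i : Fin n, ∀ x : Fin n → 𝓧,
      relEnt ((P i).tilted fun y => t * f (Function.update x i y)) (P i) ≤
        ENNReal.ofReal (c i * t^2 / 2))
    {r : ℝ} (hr : 0 < r) :
    Measure.pi P {x | r ≤ f x - ∫ x', f x' ∂(Measure.pi P)} ≤
      ENNReal.ofReal (Real.exp (-(r^2) / (2 * ∑ i, c i))) := by
  have hf : Integrable f (Measure.pi P) :=
    integrable_of_mem_interior_integrableExpSet (mem_interior_integrableExpSet_of_forall hexp 0)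
  obtain hC | hC := (Finset.sum_nonneg fun i _ => (hc i).le : 0 ≤ ∑ i, c i).eq_or_lt
  · rw [← hC, mul_zero, div_zero, exp_zero, ENNReal.ofReal_one]
    exact prob_le_one
  set t := r / ∑ i, c i
  have ht : 0 < t := div_pos hr hC
  have hlocal : ∀ i, ∀ᵐ x ∂Measure.pi P, centredMGF (fun y => f (update x i y)) (P i) t ≤
      ENNReal.ofReal (exp (c i * t ^ 2 / 2)) := fun i => by
    filter_upwards [ae_forall_integrable_exp_mul_update hexp i] with x hx
    exact centredMGF_le_of_relEnt_tilted_le hx (hc i).le (fun s hs => hLSI s hs i x) ht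
  calc _ ≤ ENNReal.ofReal (exp (-t * r)) * centredMGF f (Measure.pi P) t :=
        measure_le_sub_integral_le_exp_mul_centredMGF hf.1.aemeasurable r ht.le
    _ ≤ ENNReal.ofReal (exp (-t * r)) * ∏ i, ENNReal.ofReal (exp (c i * t ^ 2 / 2)) := by
        gcongr
        exact centredMGF_pi_le_prod hf t _ hlocal
    _ = ENNReal.ofReal (exp (-(r ^ 2) / (2 * ∑ i, c i))) := by
        rw [← ENNReal.ofReal_prod_of_nonneg fun i _ => (exp_pos _).le, ← exp_sum,
          ← ENNReal.ofReal_mul (exp_pos _).le, ← exp_add]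
        congr 2
        rw [← Finset.sum_div, ← Finset.sum_mul]
        simp only [t]
        field_simp
        ring

/-- **Entropy method / tensorization corollary.** Let `X₁,...,Xₙ` be independent with joint
product law `Measure.pi P`, and let `f` be measurable and exponentially integrable. If for
every `t > 0`, every coordinate `i`, and every configuration of the other coordinates, the
divergence between the tilting of `P i` by `t ↦ t·fᵢ(·|x̄ⁱ)` and `P i` is at most `cᵢt²/2`,
then `P(f(Xⁿ) - E[f(Xⁿ)] ≥ r) ≤ exp(-r²/(2∑cᵢ))` for every `r > 0`. -/
theorem concentration_from_local_tilted_bounds {𝓧 : Type*} [MeasurableSpace 𝓧]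
    [StandardBorelSpace 𝓧] [Nonempty 𝓧] {n : ℕ}
    (P : Fin n → Measure 𝓧) [∀ i, IsProbabilityMeasure (P i)]
    (f : (Fin n → 𝓧) → ℝ) (hf : Measurable f)
    (hexp : ∀ lam : ℝ, Integrable (fun x => Real.exp (lam * f x)) (Measure.pi P))
    (c : Fin n → ℝ) (hc : ∀ i, 0 < c i)
    (hLSI : ∀ t : ℝ, 0 < t → ∀ i : Fin n, ∀ x : Fin n → 𝓧,
      relEnt ((P i).tilted fun y => t * f (Function.update x i y)) (P i) ≤
        ENNReal.ofReal (c i * t^2 / 2))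
    {r : ℝ} (hr : 0 < r) :
    Measure.pi P {x | r ≤ f x - ∫ x', f x' ∂(Measure.pi P)} ≤
      ENNReal.ofReal (Real.exp (-(r^2) / (2 * ∑ i, c i))) :=
  concentration_from_local_tilted_bounds_general P f hexp c hc hLSI hr
end

section
/- Let (Ω, F, μ) be a probability space and let f : Ω → ℝ be a measurable function such that E_μ[exp(λ f)] < ∞ for all λ > 0. Then for every λ > 0, the relative entropy between the tilted measure and μ admits the exact 'thermal fluctuation' representation D(μ^{(λf)} ‖ μ) = ∫₀^λ ∫_t^λ Var_μ^{(sf)}[f] ds dt, where Var_μ^{(g)}[f] denotes the variance of f under the tilted measure μ^{(g)}. -/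
open MeasureTheory ProbabilityTheory
open scoped ENNReal NNReal Classical

/-!
Let `Λ(s) = log E_μ[exp (s f)]` be the cumulant generating function of `f`. On `(0, ∞)` it is
analytic, `Λ'(s)` is the mean and `Λ''(s)` the variance of `f` under `μ^{(sf)}`, and
`D(μ^{(λf)} ‖ μ) = λ Λ'(λ) - Λ(λ)`. Integrating `Λ''` twice gives `λ Λ'(λ) - Λ(λ) + Λ(0)`, and
`Λ(0) = 0`. Near `0`, where `f` need not be `μ`-integrable and `Λ'` may blow up, integrability
comes for free from `Λ'' ≥ 0`, and continuity of `Λ` at `0` from dominated convergence.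
-/

open Set Real

theorem exp_mul_le_exp_mul_add_exp_mul {a b t x : ℝ} (hat : a ≤ t) (htb : t ≤ b) :
    exp (t * x) ≤ exp (a * x) + exp (b * x) := by
  rcases le_total 0 x with hx | hx
  · exact (exp_le_exp.2 (mul_le_mul_of_nonneg_right htb hx)).trans
      (le_add_of_nonneg_left (exp_nonneg _))
  · exact (exp_le_exp.2 (mul_le_mul_of_nonpos_right hat hx)).trans
      (le_add_of_nonneg_right (exp_nonneg _))

theorem integral_eq_sub_of_hasDerivAt_of_nonneg {G G' : ℝ → ℝ} {a b : ℝ} (hab : a ≤ b)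
    (hcont : ContinuousOn G (Icc a b)) (hderiv : ∀ x ∈ Ioo a b, HasDerivAt G (G' x) x)
    (hnonneg : ∀ x ∈ Ioo a b, 0 ≤ G' x) :
    ∫ x in a..b, G' x = G b - G a :=
  intervalIntegral.integral_eq_sub_of_hasDerivAt_of_le hab hcont hderiv <|
    (intervalIntegrable_iff_integrableOn_Ioc_of_le hab).2 <|
      intervalIntegral.integrableOn_deriv_of_nonneg hcont hderiv hnonneg

theorem integral_integral_eq_of_hasDerivAt_of_nonneg {F F' F'' : ℝ → ℝ} {a b : ℝ} (hab : a ≤ b)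
    (hF : ContinuousOn F (Icc a b)) (hF' : ∀ x ∈ Ioc a b, HasDerivAt F (F' x) x)
    (hF'' : ∀ x ∈ Ioc a b, HasDerivAt F' (F'' x) x) (hF''_nonneg : ∀ x ∈ Ioc a b, 0 ≤ F'' x) :
    ∫ t in a..b, ∫ s in t..b, F'' s = (b - a) * F' b - F b + F a := by
  have inner : ∀ t ∈ Ioc a b, ∫ s in t..b, F'' s = F' b - F' t := fun t ht =>
    integral_eq_sub_of_hasDerivAt_of_nonneg ht.2
      (fun x hx => (hF'' x ⟨ht.1.trans_le hx.1, hx.2⟩).continuousAt.continuousWithinAt)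
      (fun x hx => hF'' x ⟨ht.1.trans hx.1, hx.2.le⟩)
      (fun x hx => hF''_nonneg x ⟨ht.1.trans hx.1, hx.2.le⟩)
  have outer_nonneg : ∀ t ∈ Ioo a b, 0 ≤ F' b - F' t := fun t ht => by
    rw [← inner t ⟨ht.1, ht.2.le⟩]
    exact intervalIntegral.integral_nonneg ht.2.le
      fun s hs => hF''_nonneg s ⟨ht.1.trans_le hs.1, hs.2⟩
  calc ∫ t in a..b, ∫ s in t..b, F'' s = ∫ t in a..b, (F' b - F' t) :=
        intervalIntegral.integral_congr_ae <| ae_of_all _ fun t ht =>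
          inner t (by rwa [uIoc_of_le hab] at ht)
    _ = (b * F' b - F b) - (a * F' b - F a) :=
        integral_eq_sub_of_hasDerivAt_of_nonneg (G := fun t => t * F' b - F t) hab
          ((continuous_id.mul continuous_const).continuousOn.sub hF)
          (fun x hx => (hasDerivAt_mul_const (F' b)).sub (hF' x ⟨hx.1, hx.2.le⟩)) outer_nonneg
    _ = (b - a) * F' b - F b + F a := by ring

namespace ProbabilityTheory

variable {Ω : Type*} {mΩ : MeasurableSpace Ω} {μ : Measure Ω} {X : Ω → ℝ} {a b t : ℝ}

theorem continuousOn_mgf_Icc (ha : Integrable (fun ω ↦ exp (a * X ω)) μ)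
    (hb : Integrable (fun ω ↦ exp (b * X ω)) μ) : ContinuousOn (mgf X μ) (Icc a b) :=
  continuousOn_of_dominated (bound := fun ω ↦ exp (a * X ω) + exp (b * X ω))
    (fun _ ht => (integrable_exp_mul_of_le_of_le ha hb ht.1 ht.2).aestronglyMeasurable)
    (fun _ ht => ae_of_all _ fun _ => by
      rw [norm_of_nonneg (exp_nonneg _)]
      exact exp_mul_le_exp_mul_add_exp_mul ht.1 ht.2)
    (ha.add hb) (ae_of_all _ fun _ => by fun_prop)

theorem continuousOn_cgf_Icc [IsProbabilityMeasure μ] (ha : Integrable (fun ω ↦ exp (a * X ω)) μ)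
    (hb : Integrable (fun ω ↦ exp (b * X ω)) μ) : ContinuousOn (cgf X μ) (Icc a b) :=
  (continuousOn_mgf_Icc ha hb).log fun _ ht =>
    (mgf_pos (integrable_exp_mul_of_le_of_le ha hb ht.1 ht.2)).ne'

theorem hasDerivAt_cgf (ht : t ∈ interior (integrableExpSet X μ)) :
    HasDerivAt (cgf X μ) (deriv (cgf X μ) t) t :=
  (analyticAt_cgf ht).differentiableAt.hasDerivAt

theorem hasDerivAt_deriv_cgf (ht : t ∈ interior (integrableExpSet X μ)) :
    HasDerivAt (deriv (cgf X μ)) Var[X; μ.tilted (t * X ·)] t := by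
  rw [variance_tilted_mul ht, iteratedDeriv_succ, iteratedDeriv_one]
  exact (analyticAt_cgf ht).deriv.differentiableAt.hasDerivAt

theorem relEnt_tilted_mul [IsProbabilityMeasure μ] (ht : t ∈ interior (integrableExpSet X μ)) :
    relEnt (μ.tilted (t * X ·)) μ = ENNReal.ofReal (t * deriv (cgf X μ) t - cgf X μ t) := by
  have hexp : Integrable (fun ω ↦ exp (t * X ω)) μ :=
    interior_subset (s := integrableExpSet X μ) ht
  have hac := tilted_absolutelyContinuous μ (t * X ·)
  have hlog := hac.ae_eq (log_rnDeriv_tilted_left_self hexp)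
  have hX : Integrable X (μ.tilted (t * X ·)) := by
    simpa using (memLp_tilted_mul ht 1).integrable le_rfl
  have := isProbabilityMeasure_tilted hexp
  have hint := (hX.const_mul t).sub (integrable_const (log (∫ ω, exp (t * X ω) ∂μ)))
  rw [relEnt, if_pos ⟨hac, hint.congr hlog.symm⟩, integral_congr_ae hlog,
    integral_sub (hX.const_mul t) (integrable_const _), integral_const_mul,
    integral_tilted_mul_self ht]
  simp [cgf, mgf]

end ProbabilityTheory

theorem relEnt_tilted_eq_double_integral_variance_general {Ω : Type*} [MeasurableSpace Ω]
    (μ : Measure Ω) [IsProbabilityMeasure μ] (f : Ω → ℝ)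
    (hint : ∀ lam : ℝ, 0 < lam → Integrable (fun ω => Real.exp (lam * f ω)) μ)
    {lam : ℝ} (hlam : 0 < lam) :
    relEnt (μ.tilted fun ω => lam * f ω) μ =
      ENNReal.ofReal
        (∫ t in (0:ℝ)..lam, ∫ s in t..lam, variance f (μ.tilted fun ω => s * f ω)) := by
  have hpos : Ioi 0 ⊆ interior (integrableExpSet f μ) := interior_maximal hint isOpen_Ioi
  rw [relEnt_tilted_mul (hpos hlam), integral_integral_eq_of_hasDerivAt_of_nonneg hlam.le
    (continuousOn_cgf_Icc (by simp) (hint lam hlam)) (fun s hs => hasDerivAt_cgf (hpos hs.1))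
    (fun s hs => hasDerivAt_deriv_cgf (hpos hs.1)) (fun s _ => variance_nonneg _ _), cgf_zero,
    sub_zero, add_zero]

/-- **Maurer's thermal-fluctuation representation of the relative entropy.** If
`exp(λ f)` is `μ`-integrable for every `λ > 0`, then for every `λ > 0`
`D(μ^{(λf)} ‖ μ) = ∫₀^λ ∫_t^λ Var_{μ^{(sf)}}[f] ds dt`, where `μ^{(g)}` denotes the
`g`-tilting of `μ`. -/
theorem relEnt_tilted_eq_double_integral_variance {Ω : Type*} [MeasurableSpace Ω]
    (μ : Measure Ω) [IsProbabilityMeasure μ] (f : Ω → ℝ) (hf : Measurable f)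
    (hint : ∀ lam : ℝ, 0 < lam → Integrable (fun ω => Real.exp (lam * f ω)) μ)
    {lam : ℝ} (hlam : 0 < lam) :
    relEnt (μ.tilted fun ω => lam * f ω) μ =
      ENNReal.ofReal
        (∫ t in (0:ℝ)..lam, ∫ s in t..lam, variance f (μ.tilted fun ω => s * f ω)) :=
  relEnt_tilted_eq_double_integral_variance_general μ f hint hlam
end

section
/- Let P be the uniform probability measure on the Hamming cube {0,1}^n (equivalently, the law of n i.i.d. Bernoulli(1/2) random variables). For f : {0,1}^n → ℝ define Γf(x) = sqrt(Σ_{i=1}^n (f(x ⊕ e_i) − f(x))²), where e_i ∈ {0,1}^n has a 1 in position i and zeros elsewhere and ⊕ is componentwise modulo-2 addition. Then for every function f : {0,1}^n → ℝ, the discrete logarithmic Sobolev inequality D(P^{(f)} ‖ P) ≤ (1/8) · E_P^{(f)}[(Γf)²] holds, where E_P^{(f)} denotes expectation with respect to the f-tilting of P. -/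
open MeasureTheory ProbabilityTheory
open scoped ENNReal NNReal Classical

/-- The uniform probability measure on the Hamming cube `{0,1}ⁿ` (the law of `n` i.i.d.
Bernoulli(1/2) random variables). -/
noncomputable def unifCube (n : ℕ) : Measure (Fin n → Bool) :=
  (PMF.uniformOfFintype (Fin n → Bool)).toMeasure

/-!
Write `Ent(u) = E[u log u] - E[u] log E[u]` under the uniform measure, so that
`D(P^{(f)} ‖ P) = Ent(e^f) / E[e^f]`. The inequality `Ent(e^f) ≤ (1/8) E[e^f (Γf)²]` is proved by
induction on `n`. Splitting off the first coordinate, the chain rule writes the entropy on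
`{0,1}ⁿ⁺¹` as the average of the entropies of the two slices plus the entropy on `{0,1}` of
`b ↦ E_y e^{f(b,y)}`; the induction hypothesis bounds the former, and the latter is at most the
sum over `y` of the entropies of the two-point functions `b ↦ e^{f(b,y)}`, since `Ent` is convex
and positively homogeneous. With `f(1,y), f(0,y) = c ± t`, the two-point case is the elementary
inequality `t sinh t - cosh t log cosh t ≤ (t²/2) cosh t`: the difference is even, vanishes at 0
and is increasing on `t ≥ 0`.
-/

open Real

lemma mul_log_div_eq (x : ℝ) {y : ℝ} (hy : y ≠ 0) : x * log (x / y) = x * log x - x * log y := by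
  rcases eq_or_ne x 0 with rfl | hx
  · simp
  · rw [log_div hx hy, mul_sub]

lemma add_mul_log_div_add_le {a₁ a₂ b₁ b₂ : ℝ} (ha₁ : 0 ≤ a₁) (ha₂ : 0 ≤ a₂)
    (hb₁ : 0 < b₁) (hb₂ : 0 < b₂) :
    (a₁ + a₂) * log ((a₁ + a₂) / (b₁ + b₂)) ≤ a₁ * log (a₁ / b₁) + a₂ * log (a₂ / b₂) := by
  have hb : 0 < b₁ + b₂ := by positivity
  have hconv := convexOn_mul_log.2 (Set.mem_Ici.2 (div_nonneg ha₁ hb₁.le))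
    (Set.mem_Ici.2 (div_nonneg ha₂ hb₂.le)) (div_nonneg hb₁.le hb.le) (div_nonneg hb₂.le hb.le)
    (by field_simp)
  have hmix : b₁ / (b₁ + b₂) * (a₁ / b₁) + b₂ / (b₁ + b₂) * (a₂ / b₂) = (a₁ + a₂) / (b₁ + b₂) := by
    field_simp
  simp only [smul_eq_mul, hmix] at hconv
  calc (a₁ + a₂) * log ((a₁ + a₂) / (b₁ + b₂))
      = (b₁ + b₂) * ((a₁ + a₂) / (b₁ + b₂) * log ((a₁ + a₂) / (b₁ + b₂))) := by field_simp
    _ ≤ (b₁ + b₂) * (b₁ / (b₁ + b₂) * (a₁ / b₁ * log (a₁ / b₁))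
          + b₂ / (b₁ + b₂) * (a₂ / b₂ * log (a₂ / b₂))) := by gcongr
    _ = a₁ * log (a₁ / b₁) + a₂ * log (a₂ / b₂) := by field_simp

lemma mul_sinh_sub_cosh_mul_log_cosh_le (t : ℝ) :
    t * sinh t - cosh t * log (cosh t) ≤ t ^ 2 / 2 * cosh t := by
  set F : ℝ → ℝ := fun t => t ^ 2 / 2 * cosh t + cosh t * log (cosh t) - t * sinh t with hF
  have hF_deriv (t : ℝ) : HasDerivAt F (sinh t * (t ^ 2 / 2 + log (cosh t))) t := by
    have hlog : HasDerivAt (fun t => log (cosh t)) ((cosh t)⁻¹ * sinh t) t := by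
      simpa [Function.comp_def] using
        (hasDerivAt_log (cosh_pos t).ne').comp t (hasDerivAt_cosh t)
    refine ((((hasDerivAt_pow 2 t).div_const 2).mul (hasDerivAt_cosh t)).add
      ((hasDerivAt_cosh t).mul hlog) |>.sub
        ((hasDerivAt_id t).mul (hasDerivAt_sinh t))).congr_deriv ?_
    field_simp [(cosh_pos t).ne']
    simp only [id]
    ring
  have hF_mono : MonotoneOn F (Set.Ici 0) := by
    refine monotoneOn_of_hasDerivWithinAt_nonneg (convex_Ici 0)
      (fun x _ => (hF_deriv x).continuousAt.continuousWithinAt)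
      (fun x _ => (hF_deriv x).hasDerivWithinAt) fun x hx => ?_
    have hx : 0 ≤ x := le_of_lt (by simpa using hx)
    have := log_nonneg (one_le_cosh x)
    have := sinh_nonneg_iff.2 hx
    positivity
  have hF_nonneg : ∀ t, 0 ≤ t → 0 ≤ F t := fun t ht => by
    simpa [hF] using hF_mono Set.self_mem_Ici (Set.mem_Ici.2 ht) ht
  have hF_even : F (-t) = F t := by simp only [hF, cosh_neg, sinh_neg]; ring
  have : 0 ≤ F t := by
    rcases le_total 0 t with ht | ht
    · exact hF_nonneg t ht
    · exact hF_even ▸ hF_nonneg (-t) (neg_nonneg.2 ht)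
  simp only [hF] at this
  linarith

section ScaledEnt

variable {α β : Type*} [Fintype α] [Fintype β]

/-- `|α| · Ent(u)`, the entropy taken under the uniform measure on `α`. -/
noncomputable def scaledEnt (u : α → ℝ) : ℝ :=
  ∑ x, u x * log (u x) - (∑ x, u x) * log ((∑ x, u x) / Fintype.card α)

lemma scaledEnt_comp_equiv (e : α ≃ β) (u : β → ℝ) : scaledEnt (u ∘ e) = scaledEnt u := by
  simp only [scaledEnt, Function.comp_apply, Equiv.sum_comp e (fun y => u y),
    Equiv.sum_comp e (fun y => u y * log (u y)), Fintype.card_congr e]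

lemma scaledEnt_prod [Nonempty α] [Nonempty β] (u : α × β → ℝ) :
    scaledEnt u = ∑ a, scaledEnt (fun b => u (a, b)) + scaledEnt (fun a => ∑ b, u (a, b)) := by
  have hα : (Fintype.card α : ℝ) ≠ 0 := by positivity
  have hβ : (Fintype.card β : ℝ) ≠ 0 := by positivity
  simp only [scaledEnt, Fintype.card_prod, Nat.cast_mul, mul_log_div_eq _ (mul_ne_zero hα hβ),
    mul_log_div_eq _ hα, mul_log_div_eq _ hβ, log_mul hα hβ, Fintype.sum_prod_type,
    Finset.sum_sub_distrib, ← Finset.sum_mul]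
  ring

lemma scaledEnt_eq_sum_mul_log_div_mean [Nonempty α] {u : α → ℝ} (hu : ∀ x, 0 < u x) :
    scaledEnt u = ∑ x, u x * log (u x / ((∑ y, u y) / Fintype.card α)) := by
  have hmean : (∑ y, u y) / Fintype.card α ≠ 0 :=
    (div_pos (Finset.sum_pos (fun x _ => hu x) Finset.univ_nonempty) (by positivity)).ne'
  simp only [scaledEnt, mul_log_div_eq _ hmean, Finset.sum_sub_distrib, Finset.sum_mul]

lemma scaledEnt_add_le [Nonempty α] {u v : α → ℝ} (hu : ∀ x, 0 < u x) (hv : ∀ x, 0 < v x) :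
    scaledEnt (u + v) ≤ scaledEnt u + scaledEnt v := by
  have hmean : ∀ w : α → ℝ, (∀ x, 0 < w x) → 0 < (∑ y, w y) / Fintype.card α := fun w hw =>
    div_pos (Finset.sum_pos (fun x _ => hw x) Finset.univ_nonempty) (by positivity)
  have huv : ∀ x, 0 < (u + v) x := fun x => add_pos (hu x) (hv x)
  rw [scaledEnt_eq_sum_mul_log_div_mean hu, scaledEnt_eq_sum_mul_log_div_mean hv,
    scaledEnt_eq_sum_mul_log_div_mean huv, ← Finset.sum_add_distrib]
  refine Finset.sum_le_sum fun x _ => ?_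
  simp only [Pi.add_apply, Finset.sum_add_distrib, add_div (∑ y, u y)]
  exact add_mul_log_div_add_le (hu x).le (hv x).le (hmean u hu) (hmean v hv)

lemma scaledEnt_sum_le [Nonempty α] {ι : Type*} (s : Finset ι) {u : ι → α → ℝ}
    (hu : ∀ i ∈ s, ∀ x, 0 < u i x) :
    scaledEnt (∑ i ∈ s, u i) ≤ ∑ i ∈ s, scaledEnt (u i) :=
  Finset.le_sum_of_subadditive_on_pred scaledEnt (fun w => ∀ x, 0 < w x) (by simp [scaledEnt])
    (fun _ _ => scaledEnt_add_le) (fun _ _ hv hw x => add_pos (hv x) (hw x)) u hu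

lemma scaledEnt_exp_bool_le (g : Bool → ℝ) :
    scaledEnt (fun b => exp (g b)) ≤ 1 / 8 * ∑ b, exp (g b) * (g (!b) - g b) ^ 2 := by
  obtain ⟨c, t, htrue, hfalse⟩ : ∃ c t, g true = c + t ∧ g false = c - t :=
    ⟨(g true + g false) / 2, (g true - g false) / 2, by ring, by ring⟩
  have hplus : exp (c + t) = exp c * (cosh t + sinh t) := by rw [exp_add, cosh_add_sinh]
  have hminus : exp (c - t) = exp c * (cosh t - sinh t) := by
    rw [sub_eq_add_neg, exp_add, cosh_sub_sinh]
  have hlog : log ((exp (c + t) + exp (c - t)) / 2) = c + log (cosh t) := by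
    rw [hplus, hminus, show (exp c * (cosh t + sinh t) + exp c * (cosh t - sinh t)) / 2
      = exp c * cosh t by ring, log_mul (exp_pos c).ne' (cosh_pos t).ne', log_exp]
  have key := mul_le_mul_of_nonneg_left (mul_sinh_sub_cosh_mul_log_cosh_le t) (exp_pos c).le
  simp only [scaledEnt, Fintype.sum_bool, Fintype.card_bool, Bool.not_true, Bool.not_false,
    htrue, hfalse, log_exp]
  push_cast
  rw [hlog, hplus, hminus]
  nlinarith [key]

end ScaledEnt

section Cube

variable {n : ℕ}

/-- `(Γf)(x)²`. -/
def sqGrad (f : (Fin n → Bool) → ℝ) (x : Fin n → Bool) : ℝ :=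
  ∑ i, (f (Function.update x i (!(x i))) - f x) ^ 2

lemma sqGrad_cons (f : (Fin (n + 1) → Bool) → ℝ) (b : Bool) (y : Fin n → Bool) :
    sqGrad f (Fin.cons b y) =
      (f (Fin.cons (!b) y) - f (Fin.cons b y)) ^ 2 + sqGrad (fun y => f (Fin.cons b y)) y := by
  simp only [sqGrad, Fin.sum_univ_succ, Fin.cons_zero, Fin.update_cons_zero, Fin.cons_succ,
    ← Fin.cons_update]

theorem scaledEnt_exp_le_sum_sqGrad (f : (Fin n → Bool) → ℝ) :
    scaledEnt (fun x => exp (f x)) ≤ 1 / 8 * ∑ x, exp (f x) * sqGrad f x := by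
  induction n with
  | zero => simp [scaledEnt, sqGrad]
  | succ n ih =>
    let e := Fin.consEquiv fun _ : Fin (n + 1) => Bool
    calc scaledEnt (fun x => exp (f x))
        = scaledEnt (fun p : Bool × (Fin n → Bool) => exp (f (Fin.cons p.1 p.2))) :=
          (scaledEnt_comp_equiv e _).symm
      _ = ∑ b, scaledEnt (fun y => exp (f (Fin.cons b y)))
            + scaledEnt (fun b => ∑ y, exp (f (Fin.cons b y))) := scaledEnt_prod _
      _ ≤ ∑ b, 1 / 8 * ∑ y, exp (f (Fin.cons b y)) * sqGrad (fun y => f (Fin.cons b y)) y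
            + ∑ y, 1 / 8 * ∑ b, exp (f (Fin.cons b y)) *
                (f (Fin.cons (!b) y) - f (Fin.cons b y)) ^ 2 := by
          gcongr with b
          · exact ih _
          · calc scaledEnt (fun b => ∑ y, exp (f (Fin.cons b y)))
                = scaledEnt (∑ y, fun b => exp (f (Fin.cons b y))) := by
                  simp only [Finset.sum_fn]
              _ ≤ ∑ y, scaledEnt (fun b => exp (f (Fin.cons b y))) :=
                  scaledEnt_sum_le _ fun _ _ _ => exp_pos _
              _ ≤ _ := Finset.sum_le_sum fun y _ => scaledEnt_exp_bool_le _
      _ = 1 / 8 * ∑ p : Bool × (Fin n → Bool),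
            exp (f (Fin.cons p.1 p.2)) * sqGrad f (Fin.cons p.1 p.2) := by
          simp only [sqGrad_cons, mul_add, Fintype.sum_prod_type, Finset.sum_add_distrib,
            ← Finset.mul_sum]
          rw [Finset.sum_comm (γ := Fin n → Bool)]
          ring
      _ = 1 / 8 * ∑ x, exp (f x) * sqGrad f x := by
          congr 1
          exact e.sum_comp fun x => exp (f x) * sqGrad f x

end Cube

lemma relEnt_tilted_self {α : Type*} [MeasurableSpace α] {μ : Measure α} [IsProbabilityMeasure μ]
    {f : α → ℝ} (hf : Integrable (fun x => exp (f x)) μ) (hf' : Integrable f (μ.tilted f)) :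
    relEnt (μ.tilted f) μ =
      ENNReal.ofReal (∫ x, f x ∂(μ.tilted f) - log (∫ x, exp (f x) ∂μ)) := by
  have hac := tilted_absolutelyContinuous μ f
  have hlog := (log_rnDeriv_tilted_left_self hf).filter_mono hac.ae_le
  have := isProbabilityMeasure_tilted hf
  have hint := (hf'.sub (integrable_const _)).congr hlog.symm
  rw [relEnt, if_pos ⟨hac, hint⟩, integral_congr_ae hlog, integral_sub hf' (integrable_const _),
    integral_const, probReal_univ, one_smul]

section Uniform

variable {α : Type*} [Fintype α] [Nonempty α] [MeasurableSpace α] [MeasurableSingletonClass α]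

lemma integral_uniformOfFintype (g : α → ℝ) :
    ∫ x, g x ∂(PMF.uniformOfFintype α).toMeasure = (∑ x, g x) / Fintype.card α := by
  simp [PMF.integral_eq_sum, div_eq_inv_mul, Finset.mul_sum]

lemma integral_tilted_uniformOfFintype (f g : α → ℝ) :
    ∫ x, g x ∂((PMF.uniformOfFintype α).toMeasure.tilted f) =
      (∑ x, exp (f x) * g x) / ∑ x, exp (f x) := by
  rw [integral_tilted, integral_uniformOfFintype, integral_uniformOfFintype]
  simp only [smul_eq_mul, div_mul_eq_mul_div, ← Finset.sum_div]
  field_simp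

lemma relEnt_tilted_uniformOfFintype (f : α → ℝ) :
    relEnt ((PMF.uniformOfFintype α).toMeasure.tilted f) (PMF.uniformOfFintype α).toMeasure =
      ENNReal.ofReal (scaledEnt (fun x => exp (f x)) / ∑ x, exp (f x)) := by
  rw [relEnt_tilted_self .of_finite .of_finite, integral_tilted_uniformOfFintype,
    integral_uniformOfFintype, scaledEnt]
  simp only [log_exp]
  congr 1
  field_simp

end Uniform

/-- **Discrete log-Sobolev inequality on the Hamming cube for the symmetric Bernoulli
measure.** For the uniform measure `P` on `{0,1}ⁿ` and every `f : {0,1}ⁿ → ℝ`,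
`D(P^{(f)} ‖ P) ≤ (1/8) E_{P^{(f)}}[(Γf)²]`, where
`(Γf)(x)² = ∑ᵢ (f(x ⊕ eᵢ) - f(x))²`. -/
theorem discrete_logSobolev_symm_bernoulli {n : ℕ} (f : (Fin n → Bool) → ℝ) :
    relEnt ((unifCube n).tilted f) (unifCube n) ≤
      ENNReal.ofReal ((1/8) *
        ∫ x, ∑ i, (f (Function.update x i (!(x i))) - f x)^2 ∂((unifCube n).tilted f)) := by
  rw [unifCube, relEnt_tilted_uniformOfFintype, integral_tilted_uniformOfFintype, ← mul_div_assoc]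
  gcongr
  exact scaledEnt_exp_le_sum_sqGrad f
end

section
/- Let X_1, ..., X_n be independent random variables taking values in a finite set X, with joint (product) distribution P_{X^n} on X^n. Equip X^n with the Hamming metric d_n(x^n, y^n) = Σ_{i=1}^n 1{x_i ≠ y_i}, and for A ⊆ X^n and r > 0 let A_r = {x^n ∈ X^n : d_n(x^n, A) < r} denote the r-blowup of A, where d_n(x^n, A) = min_{y^n ∈ A} d_n(x^n, y^n). Then for any A ⊆ X^n with P_{X^n}(A) > 0 and any r > sqrt((n/2) ln(1/P_{X^n}(A))), P_{X^n}(A_r) ≥ 1 − exp(−(2/n)·(r − sqrt((n/2) ln(1/P_{X^n}(A))))²). (Nonasymptotic blowing-up lemma.) -/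
/-!
Marton's argument. The Hamming distance `d(·, A)` changes by at most `1` when one coordinate
changes, so by McDiarmid's inequality `d(·, A) - 𝔼 d(·, A)` is sub-Gaussian with variance proxy
`n / 4` under the product measure. Since `d(·, A)` vanishes on `A`, the lower tail bound at
`𝔼 d(·, A)` gives `P(A) ≤ exp(-2 (𝔼 d(·, A))² / n)`, i.e. `𝔼 d(·, A) ≤ √((n/2) ln(1/P(A)))`;
the upper tail bound at `r` then controls the complement of the blowup `A_r = {d(·, A) < r}`.
-/

open MeasureTheory ProbabilityTheory
open scoped ENNReal NNReal
open Hamming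

section Concentration

variable {𝓧 : Type*} [MeasurableSpace 𝓧]

theorem integral_pi_fin_succ {n : ℕ} (P : Fin (n + 1) → Measure 𝓧) [∀ i, SigmaFinite (P i)]
    {F : (Fin (n + 1) → 𝓧) → ℝ} (hF : Integrable F (Measure.pi P)) :
    ∫ x, F x ∂Measure.pi P = ∫ x, ∫ a, F (Fin.cons a x) ∂P 0 ∂Measure.pi (fun i => P i.succ) := by
  have e := (measurePreserving_piFinSuccAbove P 0).symm
  rw [← e.integral_comp', integral_prod_symm]
  · simp [MeasurableEquiv.piFinSuccAbove_symm_apply, Fin.insertNthEquiv, Fin.insertNth_zero']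
  · exact (e.integrable_comp_emb (MeasurableEquiv.measurableEmbedding _)).2 hF

variable [Finite 𝓧] [MeasurableSingletonClass 𝓧]

theorem hasSubgaussianMGF_sub_integral_of_sub_le (μ : Measure 𝓧) [IsProbabilityMeasure μ]
    {g : 𝓧 → ℝ} {c : ℝ≥0} (hg : ∀ a b, g a - g b ≤ c) :
    HasSubgaussianMGF (fun a => g a - ∫ b, g b ∂μ) ((c / 2) ^ 2) μ := by
  have := nonempty_of_isProbabilityMeasure μ
  obtain ⟨a₀, ha₀⟩ := Finite.exists_min g
  simpa using hasSubgaussianMGF_of_mem_Icc (μ := μ) (a := g a₀) (b := g a₀ + c)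
    (measurable_of_finite g).aemeasurable (ae_of_all _ fun a => ⟨ha₀ a, by linarith [hg a a₀]⟩)

theorem hasSubgaussianMGF_pi_fin_succ {n : ℕ} (P : Fin (n + 1) → Measure 𝓧)
    [∀ i, IsFiniteMeasure (P i)] {f : (Fin (n + 1) → 𝓧) → ℝ} {c₀ c : ℝ≥0}
    (hfirst : ∀ x, HasSubgaussianMGF (fun a => f (Fin.cons a x) - ∫ b, f (Fin.cons b x) ∂P 0)
      c₀ (P 0))
    (hrest : HasSubgaussianMGF
      (fun x => ∫ a, f (Fin.cons a x) ∂P 0 -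
        ∫ y, ∫ a, f (Fin.cons a y) ∂P 0 ∂Measure.pi (fun i => P i.succ))
      c (Measure.pi fun i => P i.succ)) :
    HasSubgaussianMGF (fun x => f x - ∫ y, f y ∂Measure.pi P) (c₀ + c) (Measure.pi P) := by
  set ν := Measure.pi fun i : Fin n => P i.succ
  set h : (Fin n → 𝓧) → ℝ := fun x => ∫ a, f (Fin.cons a x) ∂P 0
  have hmean : ∫ y, f y ∂Measure.pi P = ∫ y, h y ∂ν := integral_pi_fin_succ P Integrable.of_finite
  refine ⟨fun t => Integrable.of_finite, fun t => ?_⟩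
  calc mgf (fun x => f x - ∫ y, f y ∂Measure.pi P) (Measure.pi P) t
      = ∫ x, Real.exp (t * (h x - ∫ y, h y ∂ν)) *
          mgf (fun a => f (Fin.cons a x) - h x) (P 0) t ∂ν := by
        simp only [mgf]
        rw [integral_pi_fin_succ P Integrable.of_finite]
        refine integral_congr_ae (ae_of_all _ fun x => ?_)
        dsimp only
        rw [← integral_const_mul]
        refine integral_congr_ae (ae_of_all _ fun a => ?_)
        rw [hmean]
        dsimp only
        rw [← Real.exp_add]
        congr 1
        ring
    _ ≤ ∫ x, Real.exp (t * (h x - ∫ y, h y ∂ν)) * Real.exp (c₀ * t ^ 2 / 2) ∂ν :=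
        integral_mono Integrable.of_finite Integrable.of_finite fun x =>
          mul_le_mul_of_nonneg_left ((hfirst x).mgf_le t) (Real.exp_pos _).le
    _ = mgf (fun x => h x - ∫ y, h y ∂ν) ν t * Real.exp (c₀ * t ^ 2 / 2) :=
        integral_mul_const _ _
    _ ≤ Real.exp (c * t ^ 2 / 2) * Real.exp (c₀ * t ^ 2 / 2) :=
        mul_le_mul_of_nonneg_right (hrest.mgf_le t) (Real.exp_pos _).le
    _ = Real.exp ((c₀ + c : ℝ≥0) * t ^ 2 / 2) := by
        rw [← Real.exp_add]
        congr 1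
        push_cast
        ring

/-- McDiarmid's bounded-differences inequality, in sub-Gaussian form. -/
theorem hasSubgaussianMGF_sub_integral_of_update_sub_le :
    ∀ {n : ℕ} (P : Fin n → Measure 𝓧) [∀ i, IsProbabilityMeasure (P i)]
    {f : (Fin n → 𝓧) → ℝ} {c : Fin n → ℝ≥0},
    (∀ x i a, f (Function.update x i a) - f x ≤ c i) →
    HasSubgaussianMGF (fun x => f x - ∫ y, f y ∂Measure.pi P) (∑ i, (c i / 2) ^ 2)
      (Measure.pi P)
  | 0, P, _, f, _, _ => by
    have hf : ∀ x : Fin 0 → 𝓧, f x - ∫ y, f y ∂Measure.pi P = 0 := fun x => by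
      simp [Subsingleton.elim _ x]
    simp [hf]
  | n + 1, P, _, f, c, hf => by
    rw [Fin.sum_univ_succ]
    refine hasSubgaussianMGF_pi_fin_succ P
      (fun x => hasSubgaussianMGF_sub_integral_of_sub_le (P 0) fun a b => ?_)
      (hasSubgaussianMGF_sub_integral_of_update_sub_le (fun i => P i.succ)
        (c := fun i => c i.succ) fun x i a => ?_)
    · simpa [Fin.update_cons_zero] using hf (Fin.cons b x) 0 a
    · calc ∫ b, f (Fin.cons b (Function.update x i a)) ∂P 0 - ∫ b, f (Fin.cons b x) ∂P 0
          = ∫ b, f (Fin.cons b (Function.update x i a)) - f (Fin.cons b x) ∂P 0 :=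
            (integral_sub Integrable.of_finite Integrable.of_finite).symm
        _ ≤ ∫ _, (c i.succ : ℝ) ∂P 0 := integral_mono Integrable.of_finite
            (integrable_const _) fun b => by
              simpa [Fin.cons_update] using hf (Fin.cons b x) i.succ a
        _ = c i.succ := by simp

end Concentration

namespace ProbabilityTheory.HasSubgaussianMGF

variable {Ω : Type*} [MeasurableSpace Ω] {μ : Measure Ω} [IsFiniteMeasure μ] {f : Ω → ℝ}
  {c : ℝ≥0} {A : Set Ω}

theorem integral_le_sqrt_log (hf : HasSubgaussianMGF (fun x => f x - μ[f]) c μ) (hc : c ≠ 0)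
    (hA : 0 < μ.real A) (hfA : ∀ x ∈ A, f x ≤ 0) :
    μ[f] ≤ √(2 * c * Real.log (1 / μ.real A)) := by
  rcases le_or_gt μ[f] 0 with hm | hm
  · exact hm.trans (Real.sqrt_nonneg _)
  have hAm : μ.real A ≤ Real.exp (-μ[f] ^ 2 / (2 * c)) :=
    (measureReal_mono fun x hx => by simp [hfA x hx]).trans (hf.neg.measure_ge_le hm.le)
  have hlog := (Real.log_le_iff_le_exp hA).2 hAm
  rw [le_div_iff₀ (by positivity)] at hlog
  rw [Real.le_sqrt' hm, one_div, Real.log_inv]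
  linarith

theorem measureReal_ge_le_exp_sub_sqrt_log (hf : HasSubgaussianMGF (fun x => f x - μ[f]) c μ)
    (hc : c ≠ 0) (hA : 0 < μ.real A) (hfA : ∀ x ∈ A, f x ≤ 0) {r : ℝ}
    (hr : √(2 * c * Real.log (1 / μ.real A)) ≤ r) :
    μ.real {x | r ≤ f x} ≤ Real.exp (-(r - √(2 * c * Real.log (1 / μ.real A))) ^ 2 / (2 * c)) := by
  have hm := hf.integral_le_sqrt_log hc hA hfA
  calc μ.real {x | r ≤ f x} = μ.real {x | r - μ[f] ≤ f x - μ[f]} := by simp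
    _ ≤ Real.exp (-(r - μ[f]) ^ 2 / (2 * c)) := hf.measure_ge_le (by linarith)
    _ ≤ _ := by gcongr

end ProbabilityTheory.HasSubgaussianMGF

section Hamming

variable {ι : Type*} {β : ι → Type*} [Fintype ι] [DecidableEq ι] [∀ i, DecidableEq (β i)]

theorem hammingDist_update_le_one (x : ∀ i, β i) (i : ι) (a : β i) :
    hammingDist (Function.update x i a) x ≤ 1 := by
  refine (Finset.card_le_card fun j hj => ?_).trans (Finset.card_singleton i).le
  contrapose! hj
  simp [Function.update_of_ne (Finset.notMem_singleton.mp hj)]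

theorem infDist_toHamming_update_sub_le_one (s : Set (Hamming β)) (x : ∀ i, β i) (i : ι)
    (a : β i) :
    Metric.infDist (toHamming (Function.update x i a)) s - Metric.infDist (toHamming x) s ≤ 1 := by
  have hdist : dist (toHamming (Function.update x i a)) (toHamming x) ≤ 1 := by
    simpa using hammingDist_update_le_one x i a
  linarith [Metric.infDist_le_infDist_add_dist (s := s) (x := toHamming (Function.update x i a))
    (y := toHamming x)]

end Hamming

/-- **Nonasymptotic blowing-up lemma.** Let `X₁,...,Xₙ` be independent random variables with
values in a finite set `𝓧`, with joint product law `Measure.pi P` on `𝓧ⁿ`. For any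
`A ⊆ 𝓧ⁿ` of positive probability and any `r > √((n/2) ln(1/P(A)))`, the `r`-blowup of `A`
in the Hamming metric satisfies
`P(A_r) ≥ 1 - exp(-(2/n)(r - √((n/2) ln(1/P(A))))²)`. -/
theorem blowing_up_lemma {𝓧 : Type*} [Fintype 𝓧] [DecidableEq 𝓧] [MeasurableSpace 𝓧]
    [MeasurableSingletonClass 𝓧] {n : ℕ}
    (P : Fin n → Measure 𝓧) [∀ i, IsProbabilityMeasure (P i)]
    (A : Set (Fin n → 𝓧)) (hA : 0 < Measure.pi P A)
    {r : ℝ} (hr : Real.sqrt ((n/2) * Real.log (1 / (Measure.pi P A).toReal)) < r) :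
    1 - ENNReal.ofReal (Real.exp (-(2/(n:ℝ)) *
        (r - Real.sqrt ((n/2) * Real.log (1 / (Measure.pi P A).toReal)))^2)) ≤
      Measure.pi P {x | ∃ y ∈ A, (hammingDist x y : ℝ) < r} := by
  rcases n.eq_zero_or_pos with rfl | hn
  · simp -- for `n = 0` the exponent is `-(2 / 0) * _ = 0`, so the left side is `1 - 1 = 0`
  set μ := Measure.pi P
  set d : (Fin n → 𝓧) → ℝ := fun x => Metric.infDist (toHamming x) (toHamming '' A)
  have hAne : A.Nonempty := nonempty_of_measure_ne_zero hA.ne'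
  have hblowup : {x | ∃ y ∈ A, (hammingDist x y : ℝ) < r} = {x | r ≤ d x}ᶜ := by
    ext x
    simp only [d, Set.mem_ofPred_eq, Set.mem_compl_iff, not_le,
      Metric.infDist_lt_iff (hAne.image _), Set.exists_mem_image, Hamming.dist_eq_hammingDist,
      ofHamming_toHamming]
  have hd : HasSubgaussianMGF (fun x => d x - μ[d]) (∑ _ : Fin n, (1 / 2) ^ 2) μ :=
    hasSubgaussianMGF_sub_integral_of_update_sub_le P (c := fun _ => 1) fun x i a => by
      simpa using infDist_toHamming_update_sub_le_one _ x i a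
  have hc : 2 * ((∑ _ : Fin n, ((1 : ℝ≥0) / 2) ^ 2 : ℝ≥0) : ℝ) = n / 2 := by
    simp only [Finset.sum_const, Finset.card_univ, Fintype.card_fin, nsmul_eq_mul]
    push_cast
    ring
  have htail := hd.measureReal_ge_le_exp_sub_sqrt_log (by simpa using hn.ne')
    (ENNReal.toReal_pos hA.ne' (measure_ne_top _ _))
    (fun x hx => (Metric.infDist_zero_of_mem (Set.mem_image_of_mem _ hx)).le)
    (r := r) (by rw [hc]; exact hr.le)
  rw [hc] at htail
  rw [hblowup, prob_compl_eq_one_sub (Set.toFinite _).measurableSet,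
    ← ofReal_measureReal (s := {x | r ≤ d x})]
  gcongr
  refine htail.trans_eq ?_
  rw [measureReal_def]
  congr 1
  ring
end
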